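/- arXiv:2005.06116 — 9 statements merged into one kernel-verified Lean document; each statement's English description precedes it below -/
import Mathlib

section
/- Let α > 1 be real and β ∈ ℂ with Re β > −1. For every z ∈ ℂ with Im z < 0 one has the contour-rotation identity ∫₀^∞ t^β exp(i t^α − i z t) dt = exp(iπ(β+1)/(2α)) · ∫₀^∞ t^β exp(−t^α − i e^{iπ/(2α)} z t) dt, both integrals being absolutely convergent. -/
/-!
Expanding `exp (c t)` in its power series and integrating termwise against `t^β exp (-a t^α)`
gives, for `Re a > 0`,
`∫₀^∞ t^β exp (-a t^α + c t) dt = α⁻¹ ∑ₙ cⁿ/n! · a^(-(β+n+1)/α) Γ((β+n+1)/α)`: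
each term is a Gamma integral after the substitution `u = t^α`, the complex scale `a` being
reached from `a > 0` by analytic continuation. Letting `a = ε - i → -i`, both sides converge when
`Re c < 0`: the integral by dominated convergence, the series by Tannery's theorem since
`‖(ε - i)^(-s)‖ ≤ exp (π |Im s|)`. For `c = -i z` the series at `a = -i` is, term by term,
`(-i)^(-(β+1)/α) = exp (iπ(β+1)/(2α))` times the series at `a = 1` with `c` replaced by
`exp (iπ/(2α)) c`.
-/

open MeasureTheory Set Filter Topology Complex
open scoped Real Nat

lemma norm_ofReal_cpow_mul_cexp {t : ℝ} (ht : 0 < t) (β w : ℂ) :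
    ‖(t : ℂ) ^ β * exp w‖ = t ^ β.re * Real.exp w.re := by
  rw [norm_mul, norm_cpow_eq_rpow_re_of_pos ht, norm_exp]

lemma integrableOn_rpow_mul_exp_mul {σ K : ℝ} (hσ : -1 < σ) (hK : K < 0) :
    IntegrableOn (fun t : ℝ => t ^ σ * Real.exp (K * t)) (Ioi 0) := by
  simpa [Real.rpow_one] using integrableOn_rpow_mul_exp_neg_mul_rpow hσ zero_lt_one (neg_pos.2 hK)

lemma exists_mul_le_mul_rpow_add {α b : ℝ} (hα : 1 < α) (hb : 0 < b) (K : ℝ) :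
    ∃ C, ∀ t : ℝ, 0 ≤ t → K * t ≤ b * t ^ α + C := by
  -- for `t ≥ T` one has `|K| ≤ b t^(α-1)`
  set T := (|K| / b) ^ (α - 1)⁻¹
  refine ⟨|K| * T, fun t ht => ?_⟩
  have hKt : K * t ≤ |K| * t := mul_le_mul_of_nonneg_right (le_abs_self K) ht
  have hbt : 0 ≤ b * t ^ α := by positivity
  rcases le_total t T with htT | hTt
  · nlinarith [mul_le_mul_of_nonneg_left htT (abs_nonneg K)]
  · have hT : T ^ (α - 1) = |K| / b := Real.rpow_inv_rpow (by positivity) (by linarith)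
    have : |K| ≤ b * t ^ (α - 1) := by
      rw [← div_le_iff₀' hb, ← hT]
      exact Real.rpow_le_rpow (by positivity) hTt (by linarith)
    have htα : t ^ α = t ^ (α - 1) * t := by
      rw [← Real.rpow_add_one' ht (by linarith), sub_add_cancel]
    nlinarith [mul_le_mul_of_nonneg_right this ht, abs_nonneg K, show 0 ≤ T by positivity]

lemma integrableOn_rpow_mul_exp_neg_mul_rpow_add_mul {α σ b : ℝ} (hα : 1 < α) (hσ : -1 < σ)
    (hb : 0 < b) (K : ℝ) :
    IntegrableOn (fun t : ℝ => t ^ σ * Real.exp (-b * t ^ α + K * t)) (Ioi 0) := by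
  obtain ⟨C, hC⟩ := exists_mul_le_mul_rpow_add hα (half_pos hb) K
  refine ((integrableOn_rpow_mul_exp_neg_mul_rpow (p := α) hσ (by linarith) (half_pos hb)).const_mul
    (Real.exp C)).mono' (by fun_prop) ?_
  filter_upwards [ae_restrict_mem measurableSet_Ioi] with t (ht : 0 < t)
  rw [Real.norm_of_nonneg (by positivity), mul_left_comm, ← Real.exp_add]
  refine mul_le_mul_of_nonneg_left (Real.exp_le_exp.2 ?_) (by positivity)
  linarith [hC t ht.le]

lemma integrableOn_cpow_mul_cexp_neg_mul {s a : ℂ} (hs : -1 < s.re) (ha : 0 < a.re) :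
    IntegrableOn (fun t : ℝ => (t : ℂ) ^ s * exp (-(a * t))) (Ioi 0) := by
  refine (integrableOn_rpow_mul_exp_mul hs (neg_lt_zero.2 ha)).mono' (by fun_prop) ?_
  filter_upwards [ae_restrict_mem measurableSet_Ioi] with t (ht : 0 < t)
  rw [norm_ofReal_cpow_mul_cexp ht]
  simp

lemma differentiableOn_integral_cpow_mul_cexp_neg_mul {s : ℂ} (hs : 0 < s.re) :
    DifferentiableOn ℂ (fun a : ℂ => ∫ t in Ioi (0 : ℝ), (t : ℂ) ^ (s - 1) * exp (-(a * t)))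
      {a | 0 < a.re} := by
  intro a₀ (ha₀ : 0 < a₀.re)
  obtain ⟨ε, hε, hεa₀⟩ : ∃ ε, 0 < ε ∧ a₀.re = 2 * ε := ⟨a₀.re / 2, half_pos ha₀, by ring⟩
  have hball : ∀ a ∈ Metric.ball a₀ ε, ε ≤ a.re := fun a ha => by
    have := (abs_re_le_norm (a - a₀)).trans_lt (mem_ball_iff_norm.1 ha)
    rw [sub_re, abs_lt] at this
    linarith
  refine (hasDerivAt_integral_of_dominated_loc_of_deriv_le (Metric.ball_mem_nhds a₀ hε)
    (F := fun a (t : ℝ) => (t : ℂ) ^ (s - 1) * exp (-(a * t)))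
    (F' := fun a (t : ℝ) => -((t : ℂ) ^ s * exp (-(a * t))))
    (bound := fun t : ℝ => t ^ s.re * Real.exp (-ε * t))
    (.of_forall fun _ => by fun_prop)
    (integrableOn_cpow_mul_cexp_neg_mul (by rw [sub_re, one_re]; linarith) ha₀) (by fun_prop) ?_
    (integrableOn_rpow_mul_exp_mul (by linarith) (by linarith)) ?_).2.differentiableAt
    |>.differentiableWithinAt
  · filter_upwards [ae_restrict_mem measurableSet_Ioi] with t (ht : 0 < t) a ha
    rw [norm_neg, norm_ofReal_cpow_mul_cexp ht]
    gcongr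
    simpa using mul_le_mul_of_nonneg_right (hball a ha) ht.le
  · filter_upwards [ae_restrict_mem measurableSet_Ioi] with t (ht : 0 < t) a _
    have hts : (t : ℂ) ^ (s - 1) * t = (t : ℂ) ^ s := by
      rw [cpow_sub _ _ (ofReal_ne_zero.2 ht.ne'), cpow_one,
        div_mul_cancel₀ _ (ofReal_ne_zero.2 ht.ne')]
    refine ((((hasDerivAt_id a).mul_const (t : ℂ)).neg.cexp).const_mul
      ((t : ℂ) ^ (s - 1))).congr_deriv ?_
    rw [← hts]
    simp only [Pi.neg_apply, id]
    ring

theorem integral_cpow_mul_cexp_neg_mul_Ioi {s a : ℂ} (hs : 0 < s.re) (ha : 0 < a.re) :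
    ∫ t in Ioi (0 : ℝ), (t : ℂ) ^ (s - 1) * exp (-(a * t)) = a ^ (-s) * Gamma s := by
  have hU : IsOpen {a : ℂ | 0 < a.re} := isOpen_lt continuous_const continuous_re
  have hG : DifferentiableOn ℂ (fun a : ℂ => a ^ (-s) * Gamma s) {a | 0 < a.re} :=
    fun a (ha : 0 < a.re) =>
      ((differentiableAt_id.cpow_const (Or.inl ha)).mul_const _).differentiableWithinAt
  have hreal : Tendsto (fun r : ℝ => (r : ℂ)) (𝓝[>] 1) (𝓝[≠] 1) :=
    tendsto_nhdsWithin_iff.2 ⟨(continuous_ofReal.tendsto' 1 1 ofReal_one).mono_left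
      nhdsWithin_le_nhds, eventually_nhdsWithin_of_forall fun r (hr : 1 < r) =>
        by simpa using hr.ne'⟩
  -- both sides are holomorphic on `Re a > 0` and agree for real `a > 1`
  have hF := (differentiableOn_integral_cpow_mul_cexp_neg_mul hs).analyticOnNhd hU
  refine hF.eqOn_of_preconnected_of_frequently_eq (hG.analyticOnNhd hU)
    (convex_halfSpace_re_gt 0).isPreconnected (by simp : (1 : ℂ) ∈ _)
    (hreal.frequently (Eventually.frequently ?_)) ha
  filter_upwards [self_mem_nhdsWithin] with r (hr : 1 < r)
  have hr0 : 0 < r := by linarith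
  rw [integral_cpow_mul_exp_neg_mul_Ioi hs hr0, one_div,
    inv_cpow _ _ (by rw [arg_ofReal_of_nonneg hr0.le]; exact Real.pi_ne_zero.symm), ← cpow_neg]

theorem integral_cpow_mul_cexp_neg_mul_rpow {α : ℝ} (hα : 0 < α) {w a : ℂ} (hw : -1 < w.re)
    (ha : 0 < a.re) :
    ∫ t in Ioi (0 : ℝ), (t : ℂ) ^ w * exp (-(a * ↑(t ^ α))) =
      1 / α * a ^ (-((w + 1) / α)) * Gamma ((w + 1) / α) := by
  set s := (w + 1) / α
  have hαC : (α : ℂ) ≠ 0 := ofReal_ne_zero.2 hα.ne'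
  have hs : 0 < s.re := by
    simpa [s, div_ofReal_re] using div_pos (by linarith) hα
  have hsubst := integral_comp_rpow_Ioi_of_pos hα
    (g := fun y : ℝ => (y : ℂ) ^ (s - 1) * exp (-(a * y)))
  rw [integral_cpow_mul_cexp_neg_mul_Ioi hs ha] at hsubst
  rw [mul_assoc, ← hsubst, ← integral_const_mul]
  refine setIntegral_congr_fun measurableSet_Ioi fun x (hx : 0 < x) => ?_
  have hxC : (x : ℂ) ≠ 0 := ofReal_ne_zero.2 hx.ne'
  have hpow : ((x ^ (α - 1) : ℝ) : ℂ) * ((x ^ α : ℝ) : ℂ) ^ (s - 1) = (x : ℂ) ^ w := by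
    rw [ofReal_cpow hx.le, ← cpow_mul_ofReal_nonneg hx.le, ← cpow_add _ _ hxC]
    congr 1
    simp only [s]
    field_simp
    push_cast
    ring
  simp only [real_smul, ofReal_mul]
  rw [← hpow]
  field_simp

theorem hasSum_integral_mul_cexp_mul {μ : Measure ℝ} {g : ℝ → ℂ} (hg : AEStronglyMeasurable g μ)
    (c : ℂ) (h : Integrable (fun t => ‖g t‖ * Real.exp (‖c‖ * |t|)) μ) :
    HasSum (fun n : ℕ => c ^ n / n ! * ∫ t, (t : ℂ) ^ n * g t ∂μ) (∫ t, g t * exp (c * t) ∂μ) := by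
  have hterm (n : ℕ) :
      ∫ t, g t * ((c * t) ^ n / n !) ∂μ = c ^ n / n ! * ∫ t, (t : ℂ) ^ n * g t ∂μ := by
    rw [← integral_const_mul]
    congr 1 with t
    ring
  simp_rw [← hterm]
  refine hasSum_integral_of_dominated_convergence (fun n t => ‖g t‖ * ((‖c‖ * |t|) ^ n / n !))
    (fun n => hg.mul (by fun_prop)) (fun n => .of_forall fun t => ?_)
    (.of_forall fun t => (Real.summable_pow_div_factorial _).mul_left _) ?_
    (.of_forall fun t => ?_)
  · simp [norm_pow, mul_pow]
  · refine h.congr (.of_forall fun t => ?_)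
    dsimp only
    rw [((NormedSpace.expSeries_div_hasSum_exp (‖c‖ * |t|)).mul_left ‖g t‖).tsum_eq,
      Real.exp_eq_exp_ℝ]
  · rw [exp_eq_exp_ℂ]
    exact (NormedSpace.expSeries_div_hasSum_exp (c * t)).mul_left (g t)

lemma integrableOn_cpow_mul_cexp_neg_mul_rpow_add_mul {α : ℝ} (hα : 1 < α) {β a : ℂ}
    (hβ : -1 < β.re) (ha : 0 < a.re) (c : ℂ) :
    IntegrableOn (fun t : ℝ => (t : ℂ) ^ β * exp (-(a * ↑(t ^ α)) + c * t)) (Ioi 0) := by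
  refine (integrableOn_rpow_mul_exp_neg_mul_rpow_add_mul hα hβ ha c.re).mono' (by fun_prop) ?_
  filter_upwards [ae_restrict_mem measurableSet_Ioi] with t (ht : 0 < t)
  rw [norm_ofReal_cpow_mul_cexp ht]
  simp

noncomputable def expansionTerm (α : ℝ) (β a c : ℂ) (n : ℕ) : ℂ :=
  c ^ n / n ! * (1 / α * a ^ (-((β + n + 1) / α)) * Gamma ((β + n + 1) / α))

theorem hasSum_expansionTerm {α : ℝ} (hα : 1 < α) {β a : ℂ} (hβ : -1 < β.re) (ha : 0 < a.re)
    (c : ℂ) :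
    HasSum (expansionTerm α β a c)
      (∫ t in Ioi (0 : ℝ), (t : ℂ) ^ β * exp (-(a * ↑(t ^ α)) + c * t)) := by
  have hint : IntegrableOn (fun t : ℝ => ‖(t : ℂ) ^ β * exp (-(a * ↑(t ^ α)))‖ *
      Real.exp (‖c‖ * |t|)) (Ioi 0) := by
    refine (integrableOn_rpow_mul_exp_neg_mul_rpow_add_mul hα hβ ha ‖c‖).congr_fun
      (fun t (ht : 0 < t) => ?_) measurableSet_Ioi
    rw [norm_ofReal_cpow_mul_cexp ht, abs_of_pos ht, mul_assoc, ← Real.exp_add]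
    simp
  convert hasSum_integral_mul_cexp_mul (by fun_prop) c hint using 1
  · funext n
    rw [expansionTerm, ← integral_cpow_mul_cexp_neg_mul_rpow (by linarith)
      (by rw [add_re, natCast_re]; linarith [n.cast_nonneg (α := ℝ)]) ha]
    congr 1
    refine setIntegral_congr_fun measurableSet_Ioi fun t (ht : 0 < t) => ?_
    rw [cpow_add _ _ (ofReal_ne_zero.2 ht.ne'), cpow_natCast]
    ring
  · simp_rw [exp_add, mul_assoc]

lemma norm_cpow_le_exp_pi_mul_abs_im {a w : ℂ} (ha : 1 ≤ ‖a‖) (hw : w.re ≤ 0) :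
    ‖a ^ w‖ ≤ Real.exp (π * |w.im|) := by
  have harg : -(π * |w.im|) ≤ arg a * w.im := by
    have := (abs_mul (arg a) w.im).trans_le
      (mul_le_mul_of_nonneg_right (abs_arg_le_pi a) (abs_nonneg _))
    linarith [neg_abs_le (arg a * w.im)]
  calc ‖a ^ w‖ ≤ ‖a‖ ^ w.re / Real.exp (arg a * w.im) := norm_cpow_le a w
    _ ≤ 1 / Real.exp (-(π * |w.im|)) := by
      gcongr
      exact Real.rpow_le_one_of_one_le_of_nonpos ha hw
    _ = Real.exp (π * |w.im|) := by rw [Real.exp_neg, one_div, inv_inv]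

lemma norm_expansionTerm_le {α : ℝ} (hα : 0 < α) {β a : ℂ} (hβ : -1 < β.re) (ha : 1 ≤ ‖a‖)
    (c : ℂ) (n : ℕ) :
    ‖expansionTerm α β a c n‖ ≤ Real.exp (π * (|β.im| / α)) * ‖expansionTerm α β 1 c n‖ := by
  have hsplit : expansionTerm α β a c n =
      a ^ (-((β + n + 1) / α)) * expansionTerm α β 1 c n := by
    simp only [expansionTerm, one_cpow]
    ring
  have hre : (-((β + n + 1) / α)).re ≤ 0 := by
    have : 0 ≤ (β.re + n + 1) / α := div_nonneg (by linarith [n.cast_nonneg (α := ℝ)]) hα.le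
    simpa [div_ofReal_re] using this
  have him : |(-((β + n + 1) / α)).im| = |β.im| / α := by simp [abs_div, abs_of_pos hα]
  rw [hsplit, norm_mul, ← him]
  gcongr
  exact norm_cpow_le_exp_pi_mul_abs_im ha hre

lemma summable_norm_expansionTerm_one {α : ℝ} (hα : 1 < α) {β : ℂ} (hβ : -1 < β.re) (c : ℂ) :
    Summable fun n => ‖expansionTerm α β 1 c n‖ :=
  summable_norm_iff.2 (hasSum_expansionTerm hα hβ one_pos c).summable

lemma summable_expansionTerm {α : ℝ} (hα : 1 < α) {β a : ℂ} (hβ : -1 < β.re) (ha : 1 ≤ ‖a‖)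
    (c : ℂ) : Summable (expansionTerm α β a c) :=
  .of_norm_bounded ((summable_norm_expansionTerm_one hα hβ c).mul_left _)
    (norm_expansionTerm_le (by linarith) hβ ha c)

theorem tendsto_tsum_expansionTerm {ι : Type*} {l : Filter ι} {α : ℝ} (hα : 1 < α) {β : ℂ}
    (hβ : -1 < β.re) (c : ℂ) {a : ι → ℂ} {a₀ : ℂ} (ha₀ : a₀ ∈ slitPlane)
    (hlim : Tendsto a l (𝓝 a₀)) (ha : ∀ i, 1 ≤ ‖a i‖) :
    Tendsto (fun i => ∑' n, expansionTerm α β (a i) c n) l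
      (𝓝 (∑' n, expansionTerm α β a₀ c n)) := by
  refine tendsto_tsum_of_dominated_convergence
    ((summable_norm_expansionTerm_one hα hβ c).mul_left _) (fun n => ?_)
    (.of_forall fun i => norm_expansionTerm_le (by linarith) hβ (ha i) c)
  simp only [expansionTerm]
  exact ((((continuousAt_cpow_const ha₀).tendsto.comp hlim).const_mul _).mul_const _).const_mul _

lemma norm_cpow_mul_cexp_neg_mul_rpow_add_mul_le {t : ℝ} (ht : 0 < t) (α : ℝ) (β : ℂ) {a : ℂ}
    (ha : 0 ≤ a.re) (c : ℂ) :
    ‖(t : ℂ) ^ β * exp (-(a * ↑(t ^ α)) + c * t)‖ ≤ t ^ β.re * Real.exp (c.re * t) := by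
  rw [norm_ofReal_cpow_mul_cexp ht]
  gcongr
  have : 0 ≤ a.re * t ^ α := mul_nonneg ha (by positivity)
  simp only [add_re, neg_re, mul_re, ofReal_re, ofReal_im, mul_zero, sub_zero]
  linarith

theorem tendsto_integral_cpow_mul_cexp_neg_mul_rpow_add_mul {ι : Type*} {l : Filter ι}
    [l.IsCountablyGenerated] (α : ℝ) {β c : ℂ} (hβ : -1 < β.re) (hc : c.re < 0) {a : ι → ℂ}
    {a₀ : ℂ} (hlim : Tendsto a l (𝓝 a₀)) (ha : ∀ᶠ i in l, 0 ≤ (a i).re) :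
    Tendsto (fun i => ∫ t in Ioi (0 : ℝ), (t : ℂ) ^ β * exp (-(a i * ↑(t ^ α)) + c * t)) l
      (𝓝 (∫ t in Ioi (0 : ℝ), (t : ℂ) ^ β * exp (-(a₀ * ↑(t ^ α)) + c * t))) := by
  refine tendsto_integral_filter_of_dominated_convergence _ (.of_forall fun _ => by fun_prop) ?_
    (integrableOn_rpow_mul_exp_mul hβ hc) (.of_forall fun t => ?_)
  · filter_upwards [ha] with i hi
    filter_upwards [ae_restrict_mem measurableSet_Ioi] with t (ht : 0 < t)
    exact norm_cpow_mul_cexp_neg_mul_rpow_add_mul_le ht α β hi c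
  · have : Continuous fun a : ℂ => (t : ℂ) ^ β * exp (-(a * ↑(t ^ α)) + c * t) := by fun_prop
    exact (this.tendsto a₀).comp hlim

theorem hasSum_expansionTerm_neg_I {α : ℝ} (hα : 1 < α) {β c : ℂ} (hβ : -1 < β.re)
    (hc : c.re < 0) :
    HasSum (expansionTerm α β (-I) c)
      (∫ t in Ioi (0 : ℝ), (t : ℂ) ^ β * exp (-(-I * ↑(t ^ α)) + c * t)) := by
  have hlim : Tendsto (fun ε : ℝ => (ε : ℂ) - I) (𝓝[>] 0) (𝓝 (-I)) :=
    ((continuous_ofReal.sub continuous_const).tendsto' 0 (-I) (by simp)).mono_left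
      nhdsWithin_le_nhds
  have hnorm (ε : ℝ) : 1 ≤ ‖(ε : ℂ) - I‖ := by simpa using abs_im_le_norm ((ε : ℂ) - I)
  have hint := tendsto_integral_cpow_mul_cexp_neg_mul_rpow_add_mul α hβ hc hlim
    (eventually_nhdsWithin_of_forall fun ε (hε : 0 < ε) => by simpa using hε.le)
  have hsum := tendsto_tsum_expansionTerm hα hβ c (by simp [mem_slitPlane_iff]) hlim hnorm
  have hsum' := hsum.congr' (eventually_nhdsWithin_of_forall fun ε (hε : 0 < ε) =>
    (hasSum_expansionTerm hα hβ (by simpa using hε) c).tsum_eq)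
  rw [tendsto_nhds_unique hint hsum']
  exact (summable_expansionTerm hα hβ (by simp) c).hasSum

lemma expansionTerm_neg_I {α : ℝ} (hα : α ≠ 0) (β c : ℂ) (n : ℕ) :
    expansionTerm α β (-I) c n = exp (I * π * (β + 1) / (2 * α)) *
      expansionTerm α β 1 (exp (I * π / (2 * α)) * c) n := by
  have hαC : (α : ℂ) ≠ 0 := ofReal_ne_zero.2 hα
  have hrot : (-I) ^ (-((β + n + 1) / α)) =
      exp (I * π * (β + 1) / (2 * α)) * exp (I * π / (2 * α)) ^ n := by
    rw [cpow_def_of_ne_zero (neg_ne_zero.2 I_ne_zero), log_neg_I, ← exp_nat_mul, ← exp_add]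
    congr 1
    field_simp
    ring
  simp only [expansionTerm, one_cpow, hrot, mul_pow]
  ring

/-- Contour rotation identity for the Fourier–Laplace transform of
`t ↦ t^β exp(i t^α)` when `Im z < 0`. -/
theorem stmt_1 (α : ℝ) (hα : 1 < α) (β : ℂ) (hβ : -1 < β.re)
    (z : ℂ) (hz : z.im < 0) :
    IntegrableOn (fun t : ℝ => (t : ℂ) ^ β *
      Complex.exp (Complex.I * (↑(t ^ α) : ℂ) - Complex.I * z * t)) (Ioi 0) ∧
    IntegrableOn (fun t : ℝ => (t : ℂ) ^ β *
      Complex.exp (-(↑(t ^ α) : ℂ) -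
        Complex.I * Complex.exp (Complex.I * Real.pi / (2 * α)) * z * t)) (Ioi 0) ∧
    (∫ t in Ioi (0:ℝ), (t : ℂ) ^ β *
        Complex.exp (Complex.I * (↑(t ^ α) : ℂ) - Complex.I * z * t)) =
      Complex.exp (Complex.I * Real.pi * (β + 1) / (2 * α)) *
        ∫ t in Ioi (0:ℝ), (t : ℂ) ^ β *
          Complex.exp (-(↑(t ^ α) : ℂ) -
            Complex.I * Complex.exp (Complex.I * Real.pi / (2 * α)) * z * t) := by
  set c := -(I * z)
  have hc : c.re < 0 := by simpa [c] using hz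
  have hlhs : (fun t : ℝ => (t : ℂ) ^ β * exp (I * ↑(t ^ α) - I * z * t)) =
      fun t : ℝ => (t : ℂ) ^ β * exp (-(-I * ↑(t ^ α)) + c * t) := by
    funext t; congr 2; ring
  have hrhs : (fun t : ℝ => (t : ℂ) ^ β *
      exp (-↑(t ^ α) - I * exp (I * π / (2 * α)) * z * t)) =
      fun t : ℝ => (t : ℂ) ^ β * exp (-(1 * ↑(t ^ α)) + exp (I * π / (2 * α)) * c * t) := by
    funext t; congr 2; ring
  rw [hlhs, hrhs]
  refine ⟨(integrableOn_rpow_mul_exp_mul hβ hc).mono' (by fun_prop) ?_,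
    integrableOn_cpow_mul_cexp_neg_mul_rpow_add_mul hα hβ one_pos _, ?_⟩
  · filter_upwards [ae_restrict_mem measurableSet_Ioi] with t (ht : 0 < t)
    exact norm_cpow_mul_cexp_neg_mul_rpow_add_mul_le ht α β (by simp) c
  · refine (hasSum_expansionTerm_neg_I hα hβ hc).unique ?_
    rw [funext (expansionTerm_neg_I (by linarith : α ≠ 0) β c)]
    exact (hasSum_expansionTerm hα hβ one_pos _).mul_left _
end

section
/- Let α > 1 be real, β ∈ ℂ with Re β > −1, and z ∈ ℂ with Im z < 0. Then the integral over the circular arc of radius R joining R e^{iπ/(2α)} to R tends to 0 as R → ∞; explicitly, ∫₀^{π/(2α)} (R e^{iη})^β exp(i R^α e^{iαη} − i z R e^{iη}) · i R e^{iη} dη → 0 as R → ∞. -/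
open MeasureTheory Set Filter

/-!
On the arc, `|exp(i R^α e^{iαη} − i z R e^{iη})| = exp(−R^α sin(αη) + R (Re z sin η + Im z cos η))`.
For `0 ≤ η ≤ π/(2α)` we have `sin η ≤ sin(αη)`, so once `|Re z| ≤ R^{α-1}` the term `R Re z sin η`
is absorbed by `R^α sin(αη)`, while `Im z cos η ≤ Im z cos(π/(2α)) < 0`. Hence the integrand is
`O(R^{Re β + 1} e^{-dR})` uniformly on the arc, with `d = −Im z cos(π/(2α)) > 0`, and this tends to `0`.
-/

open Complex

noncomputable def arcIntegrand (α : ℝ) (β z : ℂ) (R η : ℝ) : ℂ :=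
  exp (β * (Real.log R + I * η)) *
    exp (I * (↑(R ^ α) : ℂ) * exp (I * (α * η)) - I * z * R * exp (I * η)) *
    (I * R * exp (I * η))

lemma Real.sin_le_sin_mul_of_one_le {α η : ℝ} (hα : 1 ≤ α) (hη : 0 ≤ η)
    (hαη : α * η ≤ Real.pi / 2) : Real.sin η ≤ Real.sin (α * η) :=
  Real.sin_le_sin_of_le_of_le_pi_div_two (by linarith [Real.pi_pos]) hαη (by nlinarith)

lemma norm_exp_mul_log_add_I_mul {R : ℝ} (hR : 0 < R) (β : ℂ) (η : ℝ) :
    ‖exp (β * (Real.log R + I * η))‖ = R ^ β.re * Real.exp (-(β.im * η)) := by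
  rw [norm_exp, Real.rpow_def_of_pos hR, ← Real.exp_add]
  congr 1
  simp only [mul_re, add_re, ofReal_re, I_re, zero_mul, I_im, ofReal_im, mul_zero, sub_self,
    add_zero, add_im, mul_im, one_mul, zero_add]
  ring

lemma re_arcPhase (α R η : ℝ) (z : ℂ) :
    (I * (↑(R ^ α) : ℂ) * exp (I * (α * η)) - I * z * R * exp (I * η)).re
      = -(R ^ α * Real.sin (α * η)) + R * (z.re * Real.sin η + z.im * Real.cos η) := by
  simp only [sub_re, mul_re, I_re, ofReal_re, zero_mul, I_im, ofReal_im, mul_zero, sub_self,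
    exp_re, sub_zero, mul_im, add_zero, Real.exp_zero, one_mul, zero_add, exp_im, zero_sub, neg_mul]
  ring

lemma re_arcPhase_le {α R T η : ℝ} {z : ℂ} (hα : 1 ≤ α) (hR : 0 < R) (hz : z.im ≤ 0)
    (hzR : |z.re| ≤ R ^ (α - 1)) (hαT : α * T ≤ Real.pi / 2) (hη : η ∈ Icc 0 T) :
    (I * (↑(R ^ α) : ℂ) * exp (I * (α * η)) - I * z * R * exp (I * η)).re
      ≤ z.im * Real.cos T * R := by
  obtain ⟨hη0, hηT⟩ := hη
  have hαη : α * η ≤ Real.pi / 2 := by nlinarith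
  have hsin : 0 ≤ Real.sin η := Real.sin_nonneg_of_nonneg_of_le_pi hη0 (by nlinarith [Real.pi_pos])
  have hsin_le := Real.sin_le_sin_mul_of_one_le hα hη0 hαη
  have hcos : Real.cos T ≤ Real.cos η :=
    Real.cos_le_cos_of_nonneg_of_le_pi hη0 (by nlinarith [Real.pi_pos]) hηT
  have hRα : R * |z.re| ≤ R ^ α := by
    calc R * |z.re| ≤ R * R ^ (α - 1) := by gcongr
      _ = R ^ α := by rw [← Real.rpow_one_add' hR.le (by linarith), add_sub_cancel]
  have hre : R * (z.re * Real.sin η) ≤ R ^ α * Real.sin (α * η) :=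
    calc R * (z.re * Real.sin η) ≤ R * |z.re| * Real.sin (α * η) := by
          rw [← mul_assoc]
          gcongr
          · exact le_abs_self _
      _ ≤ R ^ α * Real.sin (α * η) := by gcongr; linarith
  have him : R * (z.im * Real.cos η) ≤ z.im * Real.cos T * R := by
    nlinarith [mul_le_mul_of_nonpos_left hcos hz]
  rw [re_arcPhase]
  linarith

lemma norm_arcIntegrand_le {α R T η : ℝ} {β z : ℂ} (hα : 1 ≤ α) (hR : 0 < R) (hz : z.im ≤ 0)
    (hzR : |z.re| ≤ R ^ (α - 1)) (hαT : α * T ≤ Real.pi / 2) (hη : η ∈ Icc 0 T) :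
    ‖arcIntegrand α β z R η‖
      ≤ Real.exp (|β.im| * T) * (R ^ (β.re + 1) * Real.exp (z.im * Real.cos T * R)) := by
  have hβ : Real.exp (-(β.im * η)) ≤ Real.exp (|β.im| * T) := by
    rw [Real.exp_le_exp]
    nlinarith [neg_le_abs β.im, abs_nonneg β.im, hη.1, hη.2]
  have hphase := Real.exp_le_exp.2 (re_arcPhase_le hα hR hz hzR hαT hη)
  rw [arcIntegrand, norm_mul, norm_mul, norm_exp_mul_log_add_I_mul hR, norm_exp,
    Real.rpow_add_one hR.ne']
  have hlast : ‖I * (R : ℂ) * exp (I * η)‖ = R := by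
    simp [norm_exp, abs_of_pos hR]
  rw [hlast]
  calc R ^ β.re * Real.exp (-(β.im * η)) * Real.exp _ * R
      ≤ R ^ β.re * Real.exp (|β.im| * T) * Real.exp (z.im * Real.cos T * R) * R := by gcongr
    _ = _ := by ring

lemma norm_integral_arcIntegrand_le {α R T : ℝ} {β z : ℂ} (hα : 1 ≤ α) (hR : 0 < R)
    (hz : z.im ≤ 0) (hzR : |z.re| ≤ R ^ (α - 1)) (hT : 0 ≤ T) (hαT : α * T ≤ Real.pi / 2) :
    ‖∫ η in (0:ℝ)..T, arcIntegrand α β z R η‖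
      ≤ T * Real.exp (|β.im| * T) * (R ^ (β.re + 1) * Real.exp (z.im * Real.cos T * R)) := by
  have := intervalIntegral.norm_integral_le_of_norm_le_const (a := 0) (b := T)
    (f := arcIntegrand α β z R) fun η hη ↦
      norm_arcIntegrand_le hα hR hz hzR hαT (Ioc_subset_Icc_self (uIoc_of_le hT ▸ hη))
  rwa [sub_zero, abs_of_nonneg hT, mul_comm, ← mul_assoc] at this

theorem stmt_3_general (α : ℝ) (hα : 1 < α) (β : ℂ)
    (z : ℂ) (hz : z.im < 0) :
    Tendsto (fun R : ℝ =>
      ∫ η in (0:ℝ)..(Real.pi / (2 * α)),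
        Complex.exp (β * (Real.log R + Complex.I * η)) *
          Complex.exp (Complex.I * (↑(R ^ α) : ℂ) * Complex.exp (Complex.I * (α * η))
            - Complex.I * z * R * Complex.exp (Complex.I * η)) *
          (Complex.I * R * Complex.exp (Complex.I * η)))
      atTop (nhds 0) := by
  set T := Real.pi / (2 * α)
  have hT : 0 < T := div_pos Real.pi_pos (by linarith)
  have hαT : α * T = Real.pi / 2 := by simp only [T]; field_simp
  have hcos : 0 < Real.cos T := Real.cos_pos_of_mem_Ioo ⟨by linarith [Real.pi_pos], by nlinarith⟩
  have hdecay := (tendsto_rpow_mul_exp_neg_mul_atTop_nhds_zero (β.re + 1) _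
    (mul_pos (neg_pos.2 hz) hcos)).const_mul (T * Real.exp (|β.im| * T))
  simp only [mul_zero, neg_mul, neg_neg] at hdecay
  refine squeeze_zero_norm' ?_ hdecay
  filter_upwards [eventually_gt_atTop 0,
    (tendsto_rpow_atTop (sub_pos.2 hα)).eventually_ge_atTop |z.re|] with R hR hzR
  exact norm_integral_arcIntegrand_le hα.le hR hz.le hzR hT.le hαT.le

/-- The integral over the circular arc of radius `R` joining `R e^{iπ/(2α)}`
to `R` tends to `0` as `R → ∞`; here `(R e^{iη})^β = exp(β(log R + iη))`. -/
theorem stmt_3 (α : ℝ) (hα : 1 < α) (β : ℂ) (hβ : -1 < β.re)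
    (z : ℂ) (hz : z.im < 0) :
    Tendsto (fun R : ℝ =>
      ∫ η in (0:ℝ)..(Real.pi / (2 * α)),
        Complex.exp (β * (Real.log R + Complex.I * η)) *
          Complex.exp (Complex.I * (↑(R ^ α) : ℂ) * Complex.exp (Complex.I * (α * η))
            - Complex.I * z * R * Complex.exp (Complex.I * η)) *
          (Complex.I * R * Complex.exp (Complex.I * η)))
      atTop (nhds 0) :=
  stmt_3_general α hα β z hz
end

section
/- Let α > 1 be real and β ∈ ℂ with Re β > −1. For every R > 0 and every θ with −π − π/α < θ < −π/α, the entire extension of F_{α,β} satisfies G_{α,β}(R e^{iθ}) = exp(iπ(β+1)/α) · ∫₀^∞ t^β exp(−i t^α + e^{i(θ − π/2 + π/α)} R t) dt, the integral on the right being absolutely convergent. -/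
/-!
Write `f w = w ^ β * exp (-w ^ α - c w)` with `c = i e^{iπ/(2α)} z`, so that `G_{α,β}(z)` is, up to
the constant in front, `∫₀^∞ f`. Rotating the ray of integration to `arg w = φ` gives
`K φ = ∫₀^∞ e^{iφ} f(s e^{iφ}) ds`. While `cos (α φ) > 0` the factor `exp (-s ^ α e^{iαφ})` makes
everything integrable, and the `φ`-derivative of the integrand is `i ∂ₛ` of `s` times the
integrand, which vanishes at `0` and at `∞`; so `K` is constant on `|φ| < π/(2α)`. At
`φ = π/(2α)` the power term becomes purely oscillatory and only `exp (-c e^{iφ} s)` decays, which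
it does precisely when `Re (c e^{iπ/(2α)}) > 0`, i.e. when `-π - π/α < θ < -π/α`; dominated
convergence carries the constancy of `K` up to this edge, and `K (π/(2α))` is the right-hand side.
-/

open MeasureTheory Set Filter Topology
open scoped Real

namespace Real

variable {α m : ℝ}

lemma exists_mul_le_mul_rpow_add (hα : 1 < α) (hm : 0 < m) (C : ℝ) :
    ∃ K, ∀ x, 0 ≤ x → C * x ≤ m * x ^ α + K := by
  -- Young's inequality for `(ε x) (C / ε)` with `ε ^ α = m α`
  set ε := (m * α) ^ α⁻¹
  have hε : 0 < ε := by positivity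
  have hεα : ε ^ α = m * α := rpow_inv_rpow (by positivity) (by positivity)
  set q := α.conjExponent
  refine ⟨|C / ε| ^ q / q, fun x hx => ?_⟩
  calc C * x = (ε * x) * (C / ε) := by field_simp
    _ ≤ |ε * x| ^ α / α + |C / ε| ^ q / q := young_inequality _ _ (.conjExponent hα)
    _ = m * x ^ α + |C / ε| ^ q / q := by
      rw [abs_of_nonneg (by positivity), mul_rpow hε.le hx, hεα]
      field_simp

lemma exists_rpow_mul_exp_le (hα : 1 < α) (hm : 0 < m) (a r : ℝ) :
    ∃ K, ∀ x, 0 ≤ x →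
      x ^ a * exp (-(m * x ^ α) - r * x) ≤ exp K * (x ^ a * exp (-1 * x)) := by
  obtain ⟨K, hK⟩ := exists_mul_le_mul_rpow_add hα hm (1 - r)
  refine ⟨K, fun x hx => ?_⟩
  rw [mul_left_comm, ← exp_add]
  gcongr
  linarith [hK x hx]

lemma integrableOn_rpow_mul_exp_neg_mul_rpow_sub_mul {a : ℝ} (ha : -1 < a) (hα : 1 < α)
    (hm : 0 < m) (r : ℝ) :
    IntegrableOn (fun x => x ^ a * exp (-(m * x ^ α) - r * x)) (Ioi 0) := by
  obtain ⟨K, hK⟩ := exists_rpow_mul_exp_le hα hm a r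
  have hdom : Integrable (fun x => exp K * (x ^ a * exp (-1 * x))) (volume.restrict (Ioi 0)) := by
    have := (integrableOn_rpow_mul_exp_neg_mul_rpow ha one_pos one_pos).const_mul (exp K)
    simpa only [rpow_one] using this
  refine hdom.mono' ?_ ((ae_restrict_iff' measurableSet_Ioi).2 (.of_forall fun x hx => ?_))
  · exact (by fun_prop : Measurable _).aestronglyMeasurable
  · rw [norm_of_nonneg (by have : 0 < x := hx; positivity)]
    exact hK x (le_of_lt hx)

lemma tendsto_rpow_mul_exp_neg_mul_rpow_sub_mul_atTop (a : ℝ) (hα : 1 < α) (hm : 0 < m)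
    (r : ℝ) : Tendsto (fun x => x ^ a * exp (-(m * x ^ α) - r * x)) atTop (𝓝 0) := by
  obtain ⟨K, hK⟩ := exists_rpow_mul_exp_le hα hm a r
  have := (tendsto_rpow_mul_exp_neg_mul_atTop_nhds_zero a 1 one_pos).const_mul (exp K)
  rw [mul_zero] at this
  refine squeeze_zero' ?_ (eventually_atTop.2 ⟨0, hK⟩) this
  filter_upwards [eventually_ge_atTop 0] with x hx using by positivity

lemma integrableOn_rpow_mul_exp_neg_mul {a r : ℝ} (ha : -1 < a) (hr : 0 < r) :
    IntegrableOn (fun x => x ^ a * exp (-(r * x))) (Ioi 0) := by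
  simpa only [rpow_one, neg_mul] using integrableOn_rpow_mul_exp_neg_mul_rpow ha one_pos hr

end Real

noncomputable section

open Complex

namespace FourierLaplace

variable (α : ℝ) (β c : ℂ)

def rayExp (φ s : ℝ) : ℂ :=
  exp (-(↑(s ^ α) * exp (↑(α * φ) * I)) - c * exp (φ * I) * s)

/-- `e^{iφ} f(s e^{iφ})` for `f w = w ^ β * exp (-w ^ α - c w)`, with the powers of `s e^{iφ}`
expanded as for `|φ| < π`, so that no branch of `log` enters. -/
def rayIntegrand (φ s : ℝ) : ℂ :=
  exp (φ * I * (β + 1)) * ((s : ℂ) ^ β * rayExp α c φ s)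

def rayPrimitive (φ s : ℝ) : ℂ :=
  exp (φ * I * (β + 1)) * ((s : ℂ) ^ (β + 1) * rayExp α c φ s)

/-- `s ∂ₛ log (rayPrimitive φ s)`, which is also `-i ∂_φ log (rayIntegrand φ s)`. -/
def rayLogDeriv (φ s : ℝ) : ℂ :=
  β + 1 - α * ↑(s ^ α) * exp (↑(α * φ) * I) - c * exp (φ * I) * s

variable {α β c}

lemma neg_norm_le_re_mul_exp (φ : ℝ) : -‖c‖ ≤ (c * exp (φ * I)).re := by
  simpa [norm_exp_ofReal_mul_I] using neg_le_of_abs_le (abs_re_le_norm (c * exp (φ * I)))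

lemma norm_rayExp (φ s : ℝ) :
    ‖rayExp α c φ s‖ = Real.exp (-(Real.cos (α * φ) * s ^ α) - (c * exp (φ * I)).re * s) := by
  rw [rayExp, norm_exp, sub_re, neg_re, re_ofReal_mul, re_mul_ofReal, exp_ofReal_mul_I_re,
    mul_comm (s ^ α)]

lemma norm_rayExp_le {φ s m r : ℝ} (hm : m ≤ Real.cos (α * φ)) (hr : r ≤ (c * exp (φ * I)).re)
    (hs : 0 ≤ s) : ‖rayExp α c φ s‖ ≤ Real.exp (-(m * s ^ α) - r * s) := by
  rw [norm_rayExp]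
  gcongr

lemma norm_exp_mul_I_mul_le {φ b : ℝ} (hφ : |φ| ≤ b) :
    ‖exp (φ * I * (β + 1))‖ ≤ Real.exp (b * |β.im|) := by
  rw [norm_exp]
  gcongr
  have : (φ * I * (β + 1)).re = -(φ * β.im) := by simp
  rw [this]
  calc -(φ * β.im) ≤ |φ| * |β.im| := by rw [← abs_mul]; exact neg_le_abs _
    _ ≤ b * |β.im| := by gcongr

lemma norm_rayIntegrand_le {φ s b m r : ℝ} (hφ : |φ| ≤ b) (hm : m ≤ Real.cos (α * φ))
    (hr : r ≤ (c * exp (φ * I)).re) (hs : 0 < s) :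
    ‖rayIntegrand α β c φ s‖ ≤
      Real.exp (b * |β.im|) * (s ^ β.re * Real.exp (-(m * s ^ α) - r * s)) := by
  rw [rayIntegrand, norm_mul, norm_mul, norm_cpow_eq_rpow_re_of_pos hs]
  gcongr
  · exact norm_exp_mul_I_mul_le hφ
  · exact norm_rayExp_le hm hr hs.le

lemma norm_rayLogDeriv_le (hα : 0 ≤ α) (φ : ℝ) {s : ℝ} (hs : 0 ≤ s) :
    ‖rayLogDeriv α β c φ s‖ ≤ ‖β + 1‖ + α * s ^ α + ‖c‖ * s := by
  refine (norm_sub_le _ _).trans (add_le_add ((norm_sub_le _ _).trans (add_le_add le_rfl ?_)) ?_)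
  · rw [norm_mul, norm_exp_ofReal_mul_I, mul_one, norm_mul, norm_real, norm_real,
      Real.norm_of_nonneg hα, Real.norm_of_nonneg (Real.rpow_nonneg hs α)]
  · rw [norm_mul, norm_mul, norm_exp_ofReal_mul_I, mul_one, norm_real, Real.norm_of_nonneg hs]

lemma hasDerivAt_rayIntegrand_angle (φ s : ℝ) :
    HasDerivAt (fun ψ => rayIntegrand α β c ψ s)
      (I * (rayLogDeriv α β c φ s * rayIntegrand α β c φ s)) φ := by
  have hA := (((hasDerivAt_id' (φ : ℂ)).mul_const I).mul_const (β + 1)).cexp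
  have hB := (((((hasDerivAt_id' (φ : ℂ)).const_mul (α : ℂ)).mul_const I).cexp.const_mul
    (↑(s ^ α) : ℂ)).neg.sub ((((hasDerivAt_id' (φ : ℂ)).mul_const I).cexp.const_mul c).mul_const
    (s : ℂ))).cexp
  convert (hA.mul (hB.const_mul ((s : ℂ) ^ β))).comp_ofReal using 1
  · ext ψ
    simp only [rayIntegrand, rayExp, ofReal_mul, Pi.mul_apply, Pi.neg_apply,
      Pi.sub_apply]
  · simp only [rayLogDeriv, rayIntegrand, rayExp, ofReal_mul, Pi.neg_apply, Pi.sub_apply]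
    ring

lemma hasDerivAt_rayPrimitive (hβ : β + 1 ≠ 0) (φ : ℝ) {s : ℝ} (hs : s ≠ 0) :
    HasDerivAt (rayPrimitive α β c φ) (rayLogDeriv α β c φ s * rayIntegrand α β c φ s) s := by
  have hP := hasDerivAt_ofReal_cpow_const hs hβ
  have hE := (((Real.hasDerivAt_rpow_const (p := α) (Or.inl hs)).ofReal_comp.mul_const
    (exp (↑(α * φ) * I))).neg.sub ((hasDerivAt_id s).ofReal_comp.const_mul
    (c * exp (φ * I)))).cexp
  refine ((hP.mul hE).const_mul (exp (φ * I * (β + 1)))).congr_deriv ?_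
  have hpow : (↑(α * s ^ (α - 1)) : ℂ) * s = α * ↑(s ^ α) := by
    rw [← ofReal_mul, mul_assoc, ← Real.rpow_add_one hs, sub_add_cancel, ofReal_mul]
  rw [add_sub_cancel_right, cpow_add _ _ (ofReal_ne_zero.2 hs), cpow_one]
  simp only [rayLogDeriv, rayIntegrand, rayExp, id, ofReal_one, Pi.neg_apply, Pi.sub_apply]
  linear_combination (-(exp (φ * I * (β + 1)) * (s : ℂ) ^ β * exp (↑(α * φ) * I) *
    exp (-(↑(s ^ α) * exp (↑(α * φ) * I)) - c * exp (φ * I) * s))) * hpow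

lemma rayPrimitive_eq {φ s : ℝ} (hs : s ≠ 0) :
    rayPrimitive α β c φ s = s * rayIntegrand α β c φ s := by
  rw [rayPrimitive, rayIntegrand, cpow_add _ _ (ofReal_ne_zero.2 hs), cpow_one]
  ring

lemma continuous_rayExp (hα : 0 ≤ α) (φ : ℝ) : Continuous (rayExp α c φ) := by
  have := Real.continuous_rpow_const hα
  unfold rayExp
  fun_prop

lemma measurable_rayIntegrand (φ : ℝ) : Measurable (rayIntegrand α β c φ) := by
  unfold rayIntegrand rayExp
  fun_prop

lemma measurable_rayLogDeriv (φ : ℝ) : Measurable (rayLogDeriv α β c φ) := by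
  unfold rayLogDeriv
  fun_prop

lemma add_one_re_pos (hβ : -1 < β.re) : 0 < (β + 1).re := by
  rw [add_re, one_re]
  linarith

lemma add_one_ne_zero_of_re (hβ : -1 < β.re) : β + 1 ≠ 0 :=
  fun h => (add_one_re_pos hβ).ne' (by rw [h, zero_re])

lemma continuousAt_rayPrimitive_zero (hα : 0 ≤ α) (hβ : -1 < β.re) (φ : ℝ) :
    ContinuousAt (rayPrimitive α β c φ) 0 :=
  continuousAt_const.mul ((continuousAt_ofReal_cpow_const 0 (β + 1)
    (.inl (add_one_re_pos hβ))).mul (continuous_rayExp hα φ).continuousAt)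

lemma rayPrimitive_zero (hβ : -1 < β.re) (φ : ℝ) : rayPrimitive α β c φ 0 = 0 := by
  simp [rayPrimitive, zero_cpow (add_one_ne_zero_of_re hβ)]

lemma tendsto_rayPrimitive_atTop (hα : 1 < α) (φ : ℝ) (hφ : 0 < Real.cos (α * φ)) :
    Tendsto (rayPrimitive α β c φ) atTop (𝓝 0) := by
  have hlim := (Real.tendsto_rpow_mul_exp_neg_mul_rpow_sub_mul_atTop (β.re + 1) hα hφ
    (-‖c‖)).const_mul (Real.exp (|φ| * |β.im|))
  rw [mul_zero] at hlim
  refine squeeze_zero_norm' ?_ hlim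
  filter_upwards [eventually_gt_atTop 0] with s hs
  rw [rayPrimitive_eq hs.ne', norm_mul, norm_real, Real.norm_of_nonneg hs.le,
    Real.rpow_add_one hs.ne']
  calc s * ‖rayIntegrand α β c φ s‖
      ≤ s * (Real.exp (|φ| * |β.im|) * (s ^ β.re *
          Real.exp (-(Real.cos (α * φ) * s ^ α) - -‖c‖ * s))) :=
        by gcongr; exact norm_rayIntegrand_le le_rfl le_rfl (neg_norm_le_re_mul_exp φ) hs
    _ = _ := by ring

lemma integrableOn_rayIntegrand_of_cos_pos (hα : 1 < α) (hβ : -1 < β.re) {φ : ℝ}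
    (hφ : 0 < Real.cos (α * φ)) : IntegrableOn (rayIntegrand α β c φ) (Ioi 0) := by
  refine ((Real.integrableOn_rpow_mul_exp_neg_mul_rpow_sub_mul hβ hα hφ (-‖c‖)).const_mul
    (Real.exp (|φ| * |β.im|))).mono' (measurable_rayIntegrand φ).aestronglyMeasurable ?_
  exact (ae_restrict_iff' measurableSet_Ioi).2 (.of_forall fun s hs =>
    norm_rayIntegrand_le le_rfl le_rfl (neg_norm_le_re_mul_exp φ) hs)

lemma norm_rayIntegrand_le_of_cos_nonneg {φ s b r : ℝ} (hφ : |φ| ≤ b)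
    (hcos : 0 ≤ Real.cos (α * φ)) (hr : r ≤ (c * exp (φ * I)).re) (hs : 0 < s) :
    ‖rayIntegrand α β c φ s‖ ≤ Real.exp (b * |β.im|) * (s ^ β.re * Real.exp (-(r * s))) := by
  simpa using norm_rayIntegrand_le hφ hcos hr hs

lemma integrableOn_rayIntegrand_of_re_pos (hβ : -1 < β.re) {φ : ℝ}
    (hφ : 0 ≤ Real.cos (α * φ)) (hc : 0 < (c * exp (φ * I)).re) :
    IntegrableOn (rayIntegrand α β c φ) (Ioi 0) :=
  ((Real.integrableOn_rpow_mul_exp_neg_mul hβ hc).const_mul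
    (Real.exp (|φ| * |β.im|))).mono' (measurable_rayIntegrand φ).aestronglyMeasurable
    ((ae_restrict_iff' measurableSet_Ioi).2 (.of_forall fun _ hs =>
      norm_rayIntegrand_le_of_cos_nonneg le_rfl hφ le_rfl hs))

lemma norm_rayLogDeriv_mul_rayIntegrand_le (hα : 0 ≤ α) {φ s b m r : ℝ} (hφ : |φ| ≤ b)
    (hm : m ≤ Real.cos (α * φ)) (hr : r ≤ (c * exp (φ * I)).re) (hs : 0 < s) :
    ‖rayLogDeriv α β c φ s * rayIntegrand α β c φ s‖ ≤ (‖β + 1‖ + α * s ^ α + ‖c‖ * s) *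
      (Real.exp (b * |β.im|) * (s ^ β.re * Real.exp (-(m * s ^ α) - r * s))) := by
  rw [norm_mul]
  exact mul_le_mul (norm_rayLogDeriv_le hα φ hs.le) (norm_rayIntegrand_le hφ hm hr hs)
    (norm_nonneg _) (by positivity)

lemma integrableOn_rayLogDeriv_bound (hα : 1 < α) (hβ : -1 < β.re) {m : ℝ} (hm : 0 < m)
    (b r : ℝ) : IntegrableOn (fun s => (‖β + 1‖ + α * s ^ α + ‖c‖ * s) *
      (Real.exp (b * |β.im|) * (s ^ β.re * Real.exp (-(m * s ^ α) - r * s)))) (Ioi 0) := by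
  have h := fun a (ha : -1 < a) => Real.integrableOn_rpow_mul_exp_neg_mul_rpow_sub_mul ha hα hm r
  refine IntegrableOn.congr_fun (((((h _ hβ).const_mul ‖β + 1‖).add
    ((h (β.re + α) (by linarith)).const_mul α)).add
    ((h (β.re + 1) (by linarith)).const_mul ‖c‖)).const_mul (Real.exp (b * |β.im|)))
    (fun s (hs : 0 < s) => ?_) measurableSet_Ioi
  simp only [Pi.add_apply, Real.rpow_add hs, Real.rpow_one]
  ring

lemma integral_rayLogDeriv_mul_rayIntegrand (hα : 1 < α) (hβ : -1 < β.re) {φ : ℝ}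
    (hφ : 0 < Real.cos (α * φ)) :
    ∫ s in Ioi 0, rayLogDeriv α β c φ s * rayIntegrand α β c φ s = 0 := by
  have hint : IntegrableOn (fun s => rayLogDeriv α β c φ s * rayIntegrand α β c φ s) (Ioi 0) :=
    (integrableOn_rayLogDeriv_bound hα hβ hφ |φ| (-‖c‖)).mono'
      ((measurable_rayLogDeriv φ).mul (measurable_rayIntegrand φ)).aestronglyMeasurable
      ((ae_restrict_iff' measurableSet_Ioi).2 (.of_forall fun s hs =>
        norm_rayLogDeriv_mul_rayIntegrand_le (by linarith) le_rfl le_rfl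
          (neg_norm_le_re_mul_exp φ) hs))
  rw [integral_Ioi_of_hasDerivAt_of_tendsto
    (continuousAt_rayPrimitive_zero (by linarith) hβ φ).continuousWithinAt
    (fun s hs => hasDerivAt_rayPrimitive (add_one_ne_zero_of_re hβ) φ (ne_of_gt hs)) hint
    (tendsto_rayPrimitive_atTop hα φ hφ), rayPrimitive_zero hβ, sub_zero]

lemma hasDerivAt_integral_rayIntegrand (hα : 1 < α) (hβ : -1 < β.re) {φ₀ : ℝ}
    (hφ₀ : 0 < Real.cos (α * φ₀)) :
    HasDerivAt (fun φ => ∫ s in Ioi 0, rayIntegrand α β c φ s) 0 φ₀ := by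
  have hnhds : ∀ᶠ φ in 𝓝 φ₀, |φ| ≤ |φ₀| + 1 ∧ Real.cos (α * φ₀) / 2 ≤ Real.cos (α * φ) :=
    ((continuous_abs.tendsto φ₀).eventually (eventually_le_nhds (lt_add_one _))).and
      (((Real.continuous_cos.comp (continuous_const.mul continuous_id)).tendsto φ₀).eventually
        (eventually_ge_nhds (half_lt_self hφ₀)))
  obtain ⟨-, h⟩ := hasDerivAt_integral_of_dominated_loc_of_deriv_le
    (μ := volume.restrict (Ioi 0))
    (F' := fun φ s => I * (rayLogDeriv α β c φ s * rayIntegrand α β c φ s))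
    (bound := fun s => (‖β + 1‖ + α * s ^ α + ‖c‖ * s) * (Real.exp ((|φ₀| + 1) * |β.im|) *
      (s ^ β.re * Real.exp (-(Real.cos (α * φ₀) / 2 * s ^ α) - -‖c‖ * s))))
    hnhds (.of_forall fun φ => (measurable_rayIntegrand φ).aestronglyMeasurable)
    (integrableOn_rayIntegrand_of_cos_pos hα hβ hφ₀)
    (measurable_const.mul ((measurable_rayLogDeriv φ₀).mul
      (measurable_rayIntegrand φ₀))).aestronglyMeasurable
    ((ae_restrict_iff' measurableSet_Ioi).2 (.of_forall fun s hs φ hφ => by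
      rw [norm_mul, norm_I, one_mul]
      exact norm_rayLogDeriv_mul_rayIntegrand_le (by linarith) hφ.1 hφ.2
        (neg_norm_le_re_mul_exp φ) hs))
    (integrableOn_rayLogDeriv_bound hα hβ (half_pos hφ₀) _ _)
    (.of_forall fun s φ _ => hasDerivAt_rayIntegrand_angle φ s)
  rwa [integral_const_mul, integral_rayLogDeriv_mul_rayIntegrand hα hβ hφ₀, mul_zero] at h

lemma cos_mul_pos_of_abs_lt (hα : 0 < α) {φ : ℝ} (hφ : |φ| < π / (2 * α)) :
    0 < Real.cos (α * φ) := by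
  rw [← Real.cos_abs, abs_mul, abs_of_pos hα]
  have : 0 ≤ α * |φ| := by positivity
  refine Real.cos_pos_of_mem_Ioo ⟨by linarith [Real.pi_pos], ?_⟩
  calc α * |φ| < α * (π / (2 * α)) := by gcongr
    _ = π / 2 := by field_simp

lemma integral_rayIntegrand_eq_of_abs_lt (hα : 1 < α) (hβ : -1 < β.re) {φ : ℝ}
    (hφ : |φ| < π / (2 * α)) :
    ∫ s in Ioi 0, rayIntegrand α β c φ s = ∫ s in Ioi 0, rayIntegrand α β c 0 s := by
  have hΦ : 0 < π / (2 * α) := (abs_nonneg φ).trans_lt hφ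
  have hderiv : ∀ ψ ∈ Ioo (-(π / (2 * α))) (π / (2 * α)),
      HasDerivAt (fun φ => ∫ s in Ioi 0, rayIntegrand α β c φ s) 0 ψ := fun ψ hψ =>
    hasDerivAt_integral_rayIntegrand hα hβ (cos_mul_pos_of_abs_lt (by linarith) (abs_lt.2 hψ))
  exact isOpen_Ioo.is_const_of_deriv_eq_zero isPreconnected_Ioo
    (fun ψ hψ => (hderiv ψ hψ).differentiableAt.differentiableWithinAt)
    (fun ψ hψ => (hderiv ψ hψ).deriv) (abs_lt.1 hφ) ⟨neg_lt_zero.2 hΦ, hΦ⟩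

lemma continuousWithinAt_integral_rayIntegrand (hβ : -1 < β.re) {φ₀ : ℝ}
    (hc : 0 < (c * exp (φ₀ * I)).re) :
    ContinuousWithinAt (fun φ => ∫ s in Ioi 0, rayIntegrand α β c φ s)
      {φ | 0 ≤ Real.cos (α * φ)} φ₀ := by
  have hnhds : ∀ᶠ φ in 𝓝 φ₀, |φ| ≤ |φ₀| + 1 ∧ (c * exp (φ₀ * I)).re / 2 ≤ (c * exp (φ * I)).re :=
    ((continuous_abs.tendsto φ₀).eventually (eventually_le_nhds (lt_add_one _))).and
      (((by fun_prop : Continuous fun φ : ℝ => (c * exp (φ * I)).re).tendsto φ₀).eventually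
        (eventually_ge_nhds (half_lt_self hc)))
  refine continuousWithinAt_of_dominated
    (bound := fun s => Real.exp ((|φ₀| + 1) * |β.im|) *
      (s ^ β.re * Real.exp (-((c * exp (φ₀ * I)).re / 2 * s))))
    (.of_forall fun φ => (measurable_rayIntegrand φ).aestronglyMeasurable) ?_
    ((Real.integrableOn_rpow_mul_exp_neg_mul hβ (half_pos hc)).const_mul _)
    (.of_forall fun s => (hasDerivAt_rayIntegrand_angle φ₀ s).continuousAt.continuousWithinAt)
  filter_upwards [nhdsWithin_le_nhds hnhds, self_mem_nhdsWithin] with φ hφ hcos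
  exact (ae_restrict_iff' measurableSet_Ioi).2 (.of_forall fun s hs =>
    norm_rayIntegrand_le_of_cos_nonneg hφ.1 hcos hφ.2 hs)

lemma integral_rayIntegrand_boundary_eq (hα : 1 < α) (hβ : -1 < β.re)
    (hc : 0 < (c * exp (↑(π / (2 * α)) * I)).re) :
    ∫ s in Ioi 0, rayIntegrand α β c (π / (2 * α)) s = ∫ s in Ioi 0, rayIntegrand α β c 0 s := by
  set Φ := π / (2 * α)
  have hΦ : -Φ < Φ := neg_lt_self (by positivity)
  have hsub : Ioo (-Φ) Φ ⊆ {φ | 0 ≤ Real.cos (α * φ)} := fun φ hφ =>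
    (cos_mul_pos_of_abs_lt (by linarith) (abs_lt.2 hφ)).le
  have hlim := ((continuousWithinAt_integral_rayIntegrand hβ hc).mono hsub).tendsto
  have hconst : ∀ᶠ φ in 𝓝[Ioo (-Φ) Φ] Φ,
      ∫ s in Ioi 0, rayIntegrand α β c φ s = ∫ s in Ioi 0, rayIntegrand α β c 0 s :=
    eventually_mem_nhdsWithin.mono fun φ hφ =>
      integral_rayIntegrand_eq_of_abs_lt hα hβ (abs_lt.2 hφ)
  rw [nhdsWithin_Ioo_eq_nhdsLT hΦ] at hlim hconst
  exact tendsto_nhds_unique hlim (tendsto_const_nhds.congr' (hconst.mono fun _ h => h.symm))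

theorem integral_cpow_mul_exp_rotate (hα : 1 < α) (hβ : -1 < β.re) {d : ℂ}
    (hcd : c * exp (↑(π / (2 * α)) * I) = -d) (hd : d.re < 0) :
    IntegrableOn (fun t : ℝ => (t : ℂ) ^ β * exp (-(I * ↑(t ^ α)) + d * t)) (Ioi 0) ∧
    ∫ t in Ioi (0 : ℝ), (t : ℂ) ^ β * exp (-↑(t ^ α) - c * t) =
      exp (↑(π / (2 * α)) * I * (β + 1)) *
        ∫ t in Ioi (0 : ℝ), (t : ℂ) ^ β * exp (-(I * ↑(t ^ α)) + d * t) := by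
  set Φ := π / (2 * α)
  have hαΦ : α * Φ = π / 2 := by
    simp only [Φ]
    field_simp
  have hI : exp (↑(α * Φ) * I) = I := by
    rw [hαΦ, ofReal_div, ofReal_ofNat, exp_pi_div_two_mul_I]
  have hF0 : rayIntegrand α β c 0 = fun t : ℝ => (t : ℂ) ^ β * exp (-↑(t ^ α) - c * t) := by
    ext t
    simp [rayIntegrand, rayExp]
  have hFΦ : rayIntegrand α β c Φ = fun t : ℝ =>
      exp (↑Φ * I * (β + 1)) * ((t : ℂ) ^ β * exp (-(I * ↑(t ^ α)) + d * t)) := by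
    ext t
    rw [rayIntegrand, rayExp, hI, hcd]
    ring_nf
  have hc : 0 < (c * exp (↑Φ * I)).re := by
    rw [hcd, neg_re]
    linarith
  have hint := integrableOn_rayIntegrand_of_re_pos hβ (by rw [hαΦ, Real.cos_pi_div_two]) hc
  rw [hFΦ] at hint
  refine ⟨(integrable_const_mul_iff (isUnit_iff_ne_zero.2 (exp_ne_zero _)) _).1 hint, ?_⟩
  rw [← integral_const_mul, ← hFΦ, ← hF0, integral_rayIntegrand_boundary_eq hα hβ hc]

end FourierLaplace

end

/-- The entire extension of the Fourier–Laplace transform `F_{α,β}`. -/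
noncomputable def Gab (α : ℝ) (β : ℂ) (z : ℂ) : ℂ :=
  Complex.exp (Complex.I * Real.pi * (β + 1) / (2 * α)) *
    ∫ t in Ioi (0:ℝ), (t : ℂ) ^ β *
      Complex.exp (-(↑(t ^ α) : ℂ) -
        Complex.I * Complex.exp (Complex.I * Real.pi / (2 * α)) * z * t)

/-- For `−π − π/α < θ < −π/α`, the entire extension of `F_{α,β}` is given by
the twice-rotated absolutely convergent integral. -/
theorem stmt_4 (α : ℝ) (hα : 1 < α) (β : ℂ) (hβ : -1 < β.re)
    (R : ℝ) (hR : 0 < R) (θ : ℝ)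
    (hθ₁ : -Real.pi - Real.pi / α < θ) (hθ₂ : θ < -Real.pi / α) :
    IntegrableOn (fun t : ℝ => (t : ℂ) ^ β *
      Complex.exp (-(Complex.I * (↑(t ^ α) : ℂ)) +
        Complex.exp (Complex.I * (θ - Real.pi / 2 + Real.pi / α)) * R * t)) (Ioi 0) ∧
    Gab α β (R * Complex.exp (Complex.I * θ)) =
      Complex.exp (Complex.I * Real.pi * (β + 1) / α) *
        ∫ t in Ioi (0:ℝ), (t : ℂ) ^ β *
          Complex.exp (-(Complex.I * (↑(t ^ α) : ℂ)) +
            Complex.exp (Complex.I * (θ - Real.pi / 2 + Real.pi / α)) * R * t) := by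
  open Complex in
  have hα₀ : (α : ℂ) ≠ 0 := ofReal_ne_zero.2 (by linarith)
  have hcd : I * exp (I * π / (2 * α)) * (R * exp (I * θ)) * exp (↑(π / (2 * α)) * I) =
      -(exp (I * (θ - π / 2 + π / α)) * R) := by
    rw [show I * (θ - π / 2 + π / α) = I * π / (2 * α) + ↑(π / (2 * α)) * I + I * θ - π / 2 * I by
      push_cast; field_simp; ring, exp_sub, exp_add, exp_add, exp_pi_div_two_mul_I, div_I]
    ring
  have hcos : Real.cos (θ - π / 2 + π / α) < 0 := by
    rw [← Real.cos_neg]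
    have := neg_div α π
    exact Real.cos_neg_of_pi_div_two_lt_of_lt (by linarith) (by linarith)
  have hd : (exp (I * (θ - π / 2 + π / α)) * R).re < 0 := by
    rw [show I * (θ - π / 2 + π / α) = ↑(θ - π / 2 + π / α) * I by push_cast; ring,
      re_mul_ofReal, exp_ofReal_mul_I_re]
    exact mul_neg_of_neg_of_pos hcos hR
  obtain ⟨hint, heq⟩ := FourierLaplace.integral_cpow_mul_exp_rotate hα hβ hcd hd
  refine ⟨hint, ?_⟩
  rw [Gab, heq, ← mul_assoc, ← exp_add]
  congr 2
  push_cast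
  field_simp
  ring
end

section
/- Let α > 1 be real and β ∈ ℂ with Re β > −1. For every ε > 0 there exist constants K > 0 and R₀ > 0 such that for all R ≥ R₀ and all θ ∈ [−π − π/α + ε, −ε], |G_{α,β}(R e^{iθ}) − e^{−i(θ+π/2)(β+1)} Γ(β+1) R^{−(β+1)}| ≤ K R^{−Re β − α − 1}, where Γ is the Euler gamma function and R^{−(β+1)} = exp(−(β+1) log R). -/
/-!
The substitution `t = s e^{iψ}` turns the integral defining `G_{α,β}` formally into
`∫₀^∞ f_ψ(s) ds` with `f_ψ(s) = e^{i(β+1)ψ} s^β exp(-μ e^{iαψ} s^α - b e^{iψ} s)`, `μ = 1`,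
`b = i e^{iπ/(2α)} z`. Since `∂_ψ f_ψ = i ∂_s (s f_ψ)`, differentiating under the integral shows
that this integral does not depend on `ψ` as long as it converges locally uniformly in `ψ`:
Cauchy's theorem without contours.

For `z = R e^{iθ}` we get `b = R e^{iφ}` with `φ = θ + π/2 + π/(2α)`, and the angle
`ψ = -φ/(α+1)` keeps both `αψ` and `φ + ψ` in `[-π/2 + η, π/2 - η]`, with `η > 0` depending
only on `ε`. At that angle, dropping the factor `exp(-e^{iαψ} s^α)` costs at most `s^α`, which
integrated against `s^{Re β} e^{-R sin η · s}` gives `O(R^{-Re β-α-1})`. What remains is a Gamma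
integral along a ray, which rotates back to the real axis and equals
`e^{-i(β+1)φ} Γ(β+1) R^{-(β+1)}`.
-/

open MeasureTheory Set

namespace FourierLaplace

open Filter Topology
open Complex (I exp)

variable {α κ C : ℝ} {β μ b : ℂ} {ψ s : ℝ}

lemma integrableOn_rpow_mul_exp_neg_mul {p : ℝ} (hp : -1 < p) (hκ : 0 < κ) :
    IntegrableOn (fun s : ℝ => s ^ p * Real.exp (-(κ * s))) (Ioi 0) := by
  simpa [Real.rpow_one] using integrableOn_rpow_mul_exp_neg_mul_rpow hp one_pos hκ

lemma integrableOn_poly_mul_rpow_mul_exp_neg_mul (hα : 0 ≤ α) {p : ℝ} (hp : -1 < p)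
    (hκ : 0 < κ) (A₀ A₁ A₂ : ℝ) :
    IntegrableOn (fun s : ℝ => (A₀ + A₁ * s ^ α + A₂ * s) * (s ^ p * Real.exp (-(κ * s))))
      (Ioi 0) := by
  have h₀ := (integrableOn_rpow_mul_exp_neg_mul hp hκ).const_mul A₀
  have h₁ := (integrableOn_rpow_mul_exp_neg_mul (p := p + α) (by linarith) hκ).const_mul A₁
  have h₂ := (integrableOn_rpow_mul_exp_neg_mul (p := p + 1) (by linarith) hκ).const_mul A₂
  refine IntegrableOn.congr_fun ((h₀.add h₁).add h₂) (fun s (hs : 0 < s) => ?_) measurableSet_Ioi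
  simp only [Pi.add_apply, Real.rpow_add hs, Real.rpow_one]
  ring

lemma exists_mul_le_mul_rpow_add (hα : 1 < α) {a : ℝ} (ha : 0 < a) (k : ℝ) :
    ∃ C, ∀ s ≥ 0, k * s ≤ a * s ^ α + C := by
  set s₁ := (|k| / a) ^ (α - 1)⁻¹
  refine ⟨|k| * s₁, fun s hs => ?_⟩
  have hks : k * s ≤ |k| * s := mul_le_mul_of_nonneg_right (le_abs_self k) hs
  rcases le_total s s₁ with h | h
  · nlinarith [abs_nonneg k, Real.rpow_nonneg hs α, mul_le_mul_of_nonneg_left h (abs_nonneg k)]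
  · have hpow : |k| / a ≤ s ^ (α - 1) := by
      calc |k| / a = s₁ ^ (α - 1) := by
            rw [← Real.rpow_mul (by positivity), inv_mul_cancel₀ (by linarith), Real.rpow_one]
        _ ≤ s ^ (α - 1) := Real.rpow_le_rpow (by positivity) h (by linarith)
    have hsα : s ^ α = s ^ (α - 1) * s := by
      rw [← Real.rpow_add_one' hs (by linarith), sub_add_cancel]
    have : |k| ≤ a * s ^ (α - 1) := by rwa [div_le_iff₀' ha] at hpow
    have hs₁ : 0 ≤ |k| * s₁ := by positivity
    nlinarith [mul_le_mul_of_nonneg_right this hs]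

lemma norm_exp_neg_sub_one_le {w : ℂ} (hw : 0 ≤ w.re) : ‖exp (-w) - 1‖ ≤ ‖w‖ := by
  have hderiv : ∀ t ∈ Icc (0 : ℝ) 1, HasDerivWithinAt (fun t : ℝ => exp (-(t * w)))
      (-w * exp (-(t * w))) (Icc 0 1) t := fun t _ => by
    simpa [mul_comm] using (((hasDerivAt_id t).ofReal_comp.mul_const w).neg.cexp).hasDerivWithinAt
  have hbound : ∀ t ∈ Ico (0 : ℝ) 1, ‖-w * exp (-(t * w))‖ ≤ ‖w‖ := fun t ht => by
    rw [norm_mul, norm_neg, Complex.norm_exp]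
    refine mul_le_of_le_one_right (norm_nonneg w) (Real.exp_le_one_iff.2 ?_)
    simpa [Complex.re_ofReal_mul] using mul_nonneg ht.1 hw
  simpa using norm_image_sub_le_of_norm_deriv_le_segment_01' hderiv hbound

lemma cos_le_cos_of_abs_le {x d : ℝ} (hx : |x| ≤ d) (hd : d ≤ Real.pi) :
    Real.cos d ≤ Real.cos x := by
  rw [← Real.cos_abs x]
  exact Real.cos_le_cos_of_nonneg_of_le_pi (abs_nonneg x) hd hx

lemma re_ofReal_mul_exp_mul_exp (R φ ψ : ℝ) :
    ((R : ℂ) * exp (φ * I) * exp (ψ * I)).re = R * Real.cos (φ + ψ) := by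
  rw [mul_assoc, ← Complex.exp_add, ← add_mul, ← Complex.ofReal_add, Complex.re_ofReal_mul,
    Complex.exp_ofReal_mul_I_re]

noncomputable def rotatedExponent (α : ℝ) (β μ b : ℂ) (ψ s : ℝ) : ℂ :=
  (β + 1) * (ψ * I) - μ * exp (↑(α * ψ) * I) * ↑(s ^ α) - b * exp (ψ * I) * s

/-- The integrand of `∫ t^β exp(-μ t^α - b t) dt` along the ray `t = s e^{iψ}`, Jacobian
included. -/
noncomputable def rotatedIntegrand (α : ℝ) (β μ b : ℂ) (ψ s : ℝ) : ℂ :=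
  (s : ℂ) ^ β * exp (rotatedExponent α β μ b ψ s)

noncomputable def rotatedDerivFactor (α : ℝ) (β μ b : ℂ) (ψ s : ℝ) : ℂ :=
  (β + 1) - α * μ * exp (↑(α * ψ) * I) * ↑(s ^ α) - b * exp (ψ * I) * s

lemma re_rotatedExponent :
    (rotatedExponent α β μ b ψ s).re = ((β + 1) * (ψ * I)).re
      - ((μ * exp (↑(α * ψ) * I)).re * s ^ α + (b * exp (ψ * I)).re * s) := by
  simp only [rotatedExponent, Complex.sub_re, Complex.re_mul_ofReal]
  ring

lemma norm_rotatedIntegrand_le (hs : 0 < s)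
    (hdecay : κ * s - C ≤ (μ * exp (↑(α * ψ) * I)).re * s ^ α + (b * exp (ψ * I)).re * s) :
    ‖rotatedIntegrand α β μ b ψ s‖ ≤
      Real.exp (‖β + 1‖ * |ψ| + C) * (s ^ β.re * Real.exp (-(κ * s))) := by
  have hβψ : ((β + 1) * (ψ * I)).re ≤ ‖β + 1‖ * |ψ| := by
    simpa [norm_mul] using Complex.re_le_norm ((β + 1) * (ψ * I))
  rw [rotatedIntegrand, norm_mul, Complex.norm_cpow_eq_rpow_re_of_pos hs, Complex.norm_exp,
    mul_left_comm, ← Real.exp_add]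
  gcongr
  rw [re_rotatedExponent]
  linarith

lemma norm_rotatedDerivFactor_le (hα : 0 ≤ α) (hs : 0 ≤ s) :
    ‖rotatedDerivFactor α β μ b ψ s‖ ≤ ‖β + 1‖ + α * ‖μ‖ * s ^ α + ‖b‖ * s := by
  have hμ : ‖(α : ℂ) * μ * exp (↑(α * ψ) * I) * ↑(s ^ α)‖ = α * ‖μ‖ * s ^ α := by
    rw [norm_mul, norm_mul, norm_mul, Complex.norm_exp_ofReal_mul_I, Complex.norm_real,
      Complex.norm_real, Real.norm_of_nonneg hα, Real.norm_of_nonneg (Real.rpow_nonneg hs α),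
      mul_one]
  have hb : ‖b * exp (ψ * I) * s‖ = ‖b‖ * s := by
    simp [Complex.norm_exp_ofReal_mul_I, abs_of_nonneg hs]
  rw [rotatedDerivFactor, ← hμ, ← hb]
  exact (norm_sub_le _ _).trans (by gcongr; exact norm_sub_le _ _)

lemma norm_rotatedDerivFactor_mul_le (hα : 0 ≤ α) (hs : 0 < s)
    (hdecay : κ * s - C ≤ (μ * exp (↑(α * ψ) * I)).re * s ^ α + (b * exp (ψ * I)).re * s) :
    ‖rotatedDerivFactor α β μ b ψ s * rotatedIntegrand α β μ b ψ s‖ ≤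
      Real.exp (‖β + 1‖ * |ψ| + C) *
        ((‖β + 1‖ + α * ‖μ‖ * s ^ α + ‖b‖ * s) * (s ^ β.re * Real.exp (-(κ * s)))) := by
  rw [norm_mul, mul_left_comm]
  gcongr
  · exact norm_rotatedDerivFactor_le hα hs.le
  · exact norm_rotatedIntegrand_le hs hdecay

lemma continuous_rotatedExponent (hα : 0 ≤ α) : Continuous (rotatedExponent α β μ b ψ) := by
  unfold rotatedExponent
  fun_prop (disch := exact hα)

lemma continuous_rotatedDerivFactor (hα : 0 ≤ α) :
    Continuous (rotatedDerivFactor α β μ b ψ) := by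
  unfold rotatedDerivFactor
  fun_prop (disch := exact hα)

lemma continuousOn_rotatedIntegrand (hα : 0 ≤ α) :
    ContinuousOn (rotatedIntegrand α β μ b ψ) (Ioi 0) := fun s hs =>
  ((Complex.continuousAt_ofReal_cpow_const s β (Or.inr (ne_of_gt hs))).mul
    (continuous_rotatedExponent hα).cexp.continuousAt).continuousWithinAt

lemma integrableOn_rotatedIntegrand (hα : 0 ≤ α) (hβ : -1 < β.re) (hκ : 0 < κ)
    (hdecay : ∀ s > 0,
      κ * s - C ≤ (μ * exp (↑(α * ψ) * I)).re * s ^ α + (b * exp (ψ * I)).re * s) :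
    IntegrableOn (rotatedIntegrand α β μ b ψ) (Ioi 0) := by
  refine ((integrableOn_rpow_mul_exp_neg_mul hβ hκ).const_mul
    (Real.exp (‖β + 1‖ * |ψ| + C))).mono'
    ((continuousOn_rotatedIntegrand hα).aestronglyMeasurable measurableSet_Ioi) ?_
  filter_upwards [ae_restrict_mem measurableSet_Ioi] with s hs
  exact norm_rotatedIntegrand_le hs (hdecay s hs)

lemma integrableOn_rotatedDerivFactor_mul (hα : 0 ≤ α) (hβ : -1 < β.re) (hκ : 0 < κ)
    (hdecay : ∀ s > 0,
      κ * s - C ≤ (μ * exp (↑(α * ψ) * I)).re * s ^ α + (b * exp (ψ * I)).re * s) :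
    IntegrableOn (fun s => rotatedDerivFactor α β μ b ψ s * rotatedIntegrand α β μ b ψ s)
      (Ioi 0) := by
  refine ((integrableOn_poly_mul_rpow_mul_exp_neg_mul hα hβ hκ ‖β + 1‖ (α * ‖μ‖) ‖b‖).const_mul
    (Real.exp (‖β + 1‖ * |ψ| + C))).mono' ?_ ?_
  · exact ((continuous_rotatedDerivFactor hα).continuousOn.mul
      (continuousOn_rotatedIntegrand hα)).aestronglyMeasurable measurableSet_Ioi
  · filter_upwards [ae_restrict_mem measurableSet_Ioi] with s hs
    exact norm_rotatedDerivFactor_mul_le hα hs (hdecay s hs)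

lemma hasDerivAt_rotatedExponent_angle (ψ s : ℝ) :
    HasDerivAt (fun ψ => rotatedExponent α β μ b ψ s)
      (I * rotatedDerivFactor α β μ b ψ s) ψ := by
  have hI : HasDerivAt (fun ψ : ℝ => (ψ : ℂ) * I) I ψ := by
    simpa using (hasDerivAt_id ψ).ofReal_comp.mul_const I
  have hαI : HasDerivAt (fun ψ : ℝ => (↑(α * ψ) : ℂ) * I) (α * I) ψ := by
    simpa using ((hasDerivAt_id ψ).const_mul α).ofReal_comp.mul_const I
  have h := ((hI.const_mul (β + 1)).sub ((hαI.cexp.const_mul μ).mul_const (↑(s ^ α) : ℂ))).sub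
    ((hI.cexp.const_mul b).mul_const (s : ℂ))
  exact h.congr_deriv (by rw [rotatedDerivFactor]; ring)

lemma hasDerivAt_rotatedIntegrand_angle (ψ s : ℝ) :
    HasDerivAt (fun ψ => rotatedIntegrand α β μ b ψ s)
      (I * (rotatedDerivFactor α β μ b ψ s * rotatedIntegrand α β μ b ψ s)) ψ := by
  refine ((hasDerivAt_rotatedExponent_angle ψ s).cexp.const_mul ((s : ℂ) ^ β)).congr_deriv ?_
  rw [rotatedIntegrand]
  ring

lemma hasDerivAt_cpow_add_one_mul_exp_rotatedExponent (hβ : β + 1 ≠ 0) (hs : 0 < s) :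
    HasDerivAt (fun s : ℝ => (s : ℂ) ^ (β + 1) * exp (rotatedExponent α β μ b ψ s))
      (rotatedDerivFactor α β μ b ψ s * rotatedIntegrand α β μ b ψ s) s := by
  have hpow := hasDerivAt_ofReal_cpow_const hs.ne' hβ
  have hrpow : HasDerivAt (fun s : ℝ => (↑(s ^ α) : ℂ)) ↑(α * s ^ (α - 1)) s :=
    (Real.hasDerivAt_rpow_const (Or.inl hs.ne')).ofReal_comp
  have hexp : HasDerivAt (fun s => rotatedExponent α β μ b ψ s)
      (-(μ * exp (↑(α * ψ) * I) * ↑(α * s ^ (α - 1))) - b * exp (ψ * I)) s :=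
    (((hasDerivAt_const s ((β + 1) * (ψ * I))).sub
      (hrpow.const_mul (μ * exp (↑(α * ψ) * I)))).sub
      ((Complex.ofRealCLM.hasDerivAt (x := s)).const_mul (b * exp (ψ * I)))).congr_deriv
      (by simp)
  have hsα : (s : ℂ) * ↑(α * s ^ (α - 1)) = α * ↑(s ^ α) := by
    rw [← Complex.ofReal_mul, ← Complex.ofReal_mul, Real.rpow_sub_one hs.ne']
    congr 1
    field_simp
  refine (hpow.mul hexp.cexp).congr_deriv ?_
  rw [rotatedDerivFactor, rotatedIntegrand, add_sub_cancel_right,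
    Complex.cpow_add _ _ (Complex.ofReal_ne_zero.2 hs.ne'), Complex.cpow_one]
  linear_combination
    -(μ * exp (↑(α * ψ) * I) * (s : ℂ) ^ β * exp (rotatedExponent α β μ b ψ s)) * hsα

lemma integral_rotatedDerivFactor_mul_eq_zero (hα : 0 < α) (hβ : -1 < β.re) (hκ : 0 < κ)
    (hdecay : ∀ s > 0,
      κ * s - C ≤ (μ * exp (↑(α * ψ) * I)).re * s ^ α + (b * exp (ψ * I)).re * s) :
    ∫ s in Ioi 0, rotatedDerivFactor α β μ b ψ s * rotatedIntegrand α β μ b ψ s = 0 := by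
  have hβ₁ : 0 < (β + 1).re := by simp; linarith
  have hβ₁' : β + 1 ≠ 0 := fun h => by simp [h] at hβ₁
  set F := fun s : ℝ => (s : ℂ) ^ (β + 1) * exp (rotatedExponent α β μ b ψ s)
  have hcont : ContinuousAt F 0 :=
    (Complex.continuousAt_ofReal_cpow_const 0 _ (Or.inl hβ₁)).mul
      (continuous_rotatedExponent hα.le).cexp.continuousAt
  have htop : Tendsto F atTop (𝓝 0) := by
    refine squeeze_zero_norm' (a := fun s => Real.exp (‖β + 1‖ * |ψ| + C) *
      (s ^ (β.re + 1) * Real.exp (-κ * s))) ?_ ?_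
    · filter_upwards [eventually_gt_atTop 0] with s hs
      have hF : F s = s * rotatedIntegrand α β μ b ψ s := by
        simp only [F, rotatedIntegrand, Complex.cpow_add _ _ (Complex.ofReal_ne_zero.2 hs.ne'),
          Complex.cpow_one]
        ring
      rw [hF, norm_mul, Complex.norm_real, Real.norm_of_nonneg hs.le, Real.rpow_add_one hs.ne',
        neg_mul]
      calc s * ‖rotatedIntegrand α β μ b ψ s‖
          ≤ s * (Real.exp (‖β + 1‖ * |ψ| + C) * (s ^ β.re * Real.exp (-(κ * s)))) :=
            mul_le_mul_of_nonneg_left (norm_rotatedIntegrand_le hs (hdecay s hs)) hs.le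
        _ = _ := by ring
    · simpa using (tendsto_rpow_mul_exp_neg_mul_atTop_nhds_zero _ κ hκ).const_mul
        (Real.exp (‖β + 1‖ * |ψ| + C))
  rw [integral_Ioi_of_hasDerivAt_of_tendsto hcont.continuousWithinAt
    (fun s hs => hasDerivAt_cpow_add_one_mul_exp_rotatedExponent hβ₁' hs)
    (integrableOn_rotatedDerivFactor_mul hα.le hβ hκ hdecay) htop]
  simp [F, Complex.zero_cpow hβ₁']

section Rotation

variable {l u : ℝ}

lemma hasDerivAt_integral_rotatedIntegrand (hα : 0 < α) (hβ : -1 < β.re) (hκ : 0 < κ)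
    (hdecay : ∀ ψ ∈ Ioo l u, ∀ s > 0,
      κ * s - C ≤ (μ * exp (↑(α * ψ) * I)).re * s ^ α + (b * exp (ψ * I)).re * s)
    (hψ : ψ ∈ Ioo l u) :
    HasDerivAt (fun ψ => ∫ s in Ioi 0, rotatedIntegrand α β μ b ψ s) 0 ψ := by
  have hbound : ∀ᵐ s ∂(volume.restrict (Ioi 0)), ∀ ψ ∈ Ioo l u,
      ‖I * (rotatedDerivFactor α β μ b ψ s * rotatedIntegrand α β μ b ψ s)‖ ≤
        Real.exp (‖β + 1‖ * (|l| + |u|) + C) *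
          ((‖β + 1‖ + α * ‖μ‖ * s ^ α + ‖b‖ * s) * (s ^ β.re * Real.exp (-(κ * s)))) := by
    filter_upwards [ae_restrict_mem measurableSet_Ioi] with s (hs : 0 < s) ψ hψ
    rw [norm_mul, Complex.norm_I, one_mul]
    refine (norm_rotatedDerivFactor_mul_le hα.le hs (hdecay ψ hψ s hs)).trans ?_
    have : |ψ| ≤ |l| + |u| := abs_le.2 ⟨by linarith [neg_abs_le l, abs_nonneg u, hψ.1],
      by linarith [le_abs_self u, abs_nonneg l, hψ.2]⟩
    gcongr
  have h := hasDerivAt_integral_of_dominated_loc_of_deriv_le (μ := volume.restrict (Ioi 0))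
    (F := fun ψ s => rotatedIntegrand α β μ b ψ s)
    (F' := fun ψ s => I * (rotatedDerivFactor α β μ b ψ s * rotatedIntegrand α β μ b ψ s))
    (Ioo_mem_nhds hψ.1 hψ.2)
    (Eventually.of_forall fun ψ =>
      (continuousOn_rotatedIntegrand hα.le).aestronglyMeasurable measurableSet_Ioi)
    (integrableOn_rotatedIntegrand hα.le hβ hκ (hdecay ψ hψ))
    ((integrableOn_rotatedDerivFactor_mul hα.le hβ hκ (hdecay ψ hψ)).const_mul
      I).aestronglyMeasurable
    hbound
    ((integrableOn_poly_mul_rpow_mul_exp_neg_mul hα.le hβ hκ _ _ _).const_mul _)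
    (Eventually.of_forall fun s ψ _ => hasDerivAt_rotatedIntegrand_angle ψ s)
  rw [integral_const_mul, integral_rotatedDerivFactor_mul_eq_zero hα hβ hκ (hdecay ψ hψ),
    mul_zero] at h
  exact h.2

theorem integral_rotatedIntegrand_eq (hα : 0 < α) (hβ : -1 < β.re) (hκ : 0 < κ)
    (hdecay : ∀ ψ ∈ Ioo l u, ∀ s > 0,
      κ * s - C ≤ (μ * exp (↑(α * ψ) * I)).re * s ^ α + (b * exp (ψ * I)).re * s)
    {ψ₁ ψ₂ : ℝ} (hψ₁ : ψ₁ ∈ Ioo l u) (hψ₂ : ψ₂ ∈ Ioo l u) :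
    ∫ s in Ioi 0, rotatedIntegrand α β μ b ψ₁ s = ∫ s in Ioi 0, rotatedIntegrand α β μ b ψ₂ s :=
  isOpen_Ioo.is_const_of_deriv_eq_zero isPreconnected_Ioo
    (fun _ hψ => (hasDerivAt_integral_rotatedIntegrand hα hβ hκ hdecay hψ)
      |>.differentiableAt.differentiableWithinAt)
    (fun _ hψ => (hasDerivAt_integral_rotatedIntegrand hα hβ hκ hdecay hψ).deriv) hψ₁ hψ₂

end Rotation

theorem integral_rotatedIntegrand_one_zero_eq (hα : 1 < α) (hβ : -1 < β.re)
    (hψ : |α * ψ| < Real.pi / 2) :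
    ∫ s in Ioi 0, rotatedIntegrand α β 1 b 0 s = ∫ s in Ioi 0, rotatedIntegrand α β 1 b ψ s := by
  have hα₀ : 0 < α := by linarith
  obtain ⟨d, hψd, hd⟩ := exists_between hψ
  have hcos : 0 < Real.cos d := Real.cos_pos_of_mem_Ioo ⟨by linarith [abs_nonneg (α * ψ)], hd⟩
  obtain ⟨C, hC⟩ := exists_mul_le_mul_rpow_add hα hcos (‖b‖ + 1)
  have hmem : ∀ ψ', ψ' ∈ Ioo (-d / α) (d / α) ↔ |α * ψ'| < d := fun ψ' => by
    rw [mem_Ioo, div_lt_iff₀ hα₀, lt_div_iff₀ hα₀, abs_lt, mul_comm]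
  have hdecay : ∀ ψ' ∈ Ioo (-d / α) (d / α), ∀ s > 0,
      1 * s - C ≤ ((1 : ℂ) * exp (↑(α * ψ') * I)).re * s ^ α + (b * exp (ψ' * I)).re * s := by
    intro ψ' hψ' s hs
    have hcos' := cos_le_cos_of_abs_le ((hmem ψ').1 hψ').le (by linarith [Real.pi_pos])
    have hb : -‖b‖ ≤ (b * exp (ψ' * I)).re := by
      simpa [Complex.norm_exp_ofReal_mul_I] using neg_le_of_abs_le
        (Complex.abs_re_le_norm (b * exp (ψ' * I)))
    simp only [one_mul, Complex.exp_ofReal_mul_I_re]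
    nlinarith [hC s hs.le, mul_le_mul_of_nonneg_right hcos' (Real.rpow_nonneg hs.le α)]
  exact integral_rotatedIntegrand_eq hα₀ hβ one_pos hdecay
    ((hmem 0).2 (by simpa using (abs_nonneg _).trans_lt hψd)) ((hmem ψ).2 hψd)

theorem integral_rotatedIntegrand_zero_eq_Gamma {R φ : ℝ} (hβ : -1 < β.re) (hR : 0 < R)
    (hφψ : |φ + ψ| < Real.pi / 2) :
    ∫ s in Ioi 0, rotatedIntegrand α β 0 (R * exp (φ * I)) ψ s =
      exp (-((β + 1) * (φ * I))) * Complex.Gamma (β + 1) * (R : ℂ) ^ (-(β + 1)) := by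
  have hα_one : ∀ ψ, rotatedIntegrand α β 0 (R * exp (φ * I)) ψ =
      rotatedIntegrand 1 β 0 (R * exp (φ * I)) ψ := fun ψ => by
    ext s; simp [rotatedIntegrand, rotatedExponent]
  obtain ⟨d, hψd, hd⟩ := exists_between hφψ
  have hdecay : ∀ ψ' ∈ Ioo (-φ - d) (-φ + d), ∀ s > 0,
      R * Real.cos d * s - 0 ≤ ((0 : ℂ) * exp (↑(1 * ψ') * I)).re * s ^ (1 : ℝ)
        + (R * exp (φ * I) * exp (ψ' * I)).re * s := by
    intro ψ' hψ' s hs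
    have hcos := cos_le_cos_of_abs_le (x := φ + ψ') (d := d)
      (abs_le.2 ⟨by linarith [hψ'.1], by linarith [hψ'.2]⟩) (by linarith [Real.pi_pos])
    rw [re_ofReal_mul_exp_mul_exp]
    simp only [zero_mul, Complex.zero_re, sub_zero, zero_add]
    gcongr
  have hcos : 0 < Real.cos d := Real.cos_pos_of_mem_Ioo ⟨by linarith [abs_nonneg (φ + ψ)], hd⟩
  have hψ : ψ ∈ Ioo (-φ - d) (-φ + d) := by constructor <;> linarith [abs_lt.1 hψd]
  have hφ : -φ ∈ Ioo (-φ - d) (-φ + d) := by constructor <;> linarith [abs_nonneg (φ + ψ)]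
  have hreal : ∀ s, rotatedIntegrand 1 β 0 (R * exp (φ * I)) (-φ) s =
      exp (-((β + 1) * (φ * I))) * ((s : ℂ) ^ (β + 1 - 1) * exp (-(R * s))) := fun s => by
    rw [rotatedIntegrand, rotatedExponent, add_sub_cancel_right, mul_assoc (R : ℂ),
      ← Complex.exp_add, Complex.ofReal_neg, neg_mul, add_neg_cancel, Complex.exp_zero,
      mul_one, zero_mul, zero_mul, sub_zero, sub_eq_add_neg, Complex.exp_add, mul_neg]
    ring
  rw [hα_one, integral_rotatedIntegrand_eq one_pos hβ (mul_pos hR hcos) hdecay hψ hφ]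
  simp_rw [hreal]
  rw [integral_const_mul, Complex.integral_cpow_mul_exp_neg_mul_Ioi (by simp; linarith) hR,
    one_div, Complex.inv_cpow _ _ (by simp [Complex.arg_ofReal_of_nonneg hR.le,
      Real.pi_ne_zero.symm]), ← Complex.cpow_neg]
  ring

lemma norm_rotatedIntegrand_one_sub_zero_le {m : ℝ} (hs : 0 < s) (hcos : 0 ≤ Real.cos (α * ψ))
    (hb : m ≤ (b * exp (ψ * I)).re) :
    ‖rotatedIntegrand α β 1 b ψ s - rotatedIntegrand α β 0 b ψ s‖ ≤
      Real.exp (‖β + 1‖ * |ψ|) * (s ^ (β.re + α) * Real.exp (-(m * s))) := by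
  have hsplit : rotatedIntegrand α β 1 b ψ s - rotatedIntegrand α β 0 b ψ s =
      rotatedIntegrand α β 0 b ψ s * (exp (-(exp (↑(α * ψ) * I) * ↑(s ^ α))) - 1) := by
    simp only [rotatedIntegrand, rotatedExponent, one_mul, zero_mul, sub_zero]
    rw [show ∀ x y z : ℂ, x - y - z = x - z + -y from fun _ _ _ => by ring, Complex.exp_add]
    ring
  have h₀ : ‖rotatedIntegrand α β 0 b ψ s‖ ≤
      Real.exp (‖β + 1‖ * |ψ|) * (s ^ β.re * Real.exp (-(m * s))) := by
    simpa using norm_rotatedIntegrand_le (C := 0) hs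
      (by simpa using mul_le_mul_of_nonneg_right hb hs.le)
  have h₁ : ‖exp (-(exp (↑(α * ψ) * I) * ↑(s ^ α))) - 1‖ ≤ s ^ α := by
    refine (norm_exp_neg_sub_one_le ?_).trans_eq ?_
    · rw [Complex.re_mul_ofReal, Complex.exp_ofReal_mul_I_re]
      exact mul_nonneg hcos (Real.rpow_nonneg hs.le α)
    · rw [norm_mul, Complex.norm_exp_ofReal_mul_I, Complex.norm_real,
        Real.norm_of_nonneg (Real.rpow_nonneg hs.le α), one_mul]
  rw [hsplit, norm_mul, Real.rpow_add hs]
  calc _ ≤ Real.exp (‖β + 1‖ * |ψ|) * (s ^ β.re * Real.exp (-(m * s))) * s ^ α :=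
        mul_le_mul h₀ h₁ (norm_nonneg _) (by positivity)
    _ = _ := by ring

theorem norm_integral_rotatedIntegrand_one_sub_zero_le (hα : 0 ≤ α) (hβ : -1 < β.re) {m : ℝ}
    (hm : 0 < m) (hcos : 0 ≤ Real.cos (α * ψ)) (hb : m ≤ (b * exp (ψ * I)).re) :
    ‖(∫ s in Ioi 0, rotatedIntegrand α β 1 b ψ s) - ∫ s in Ioi 0, rotatedIntegrand α β 0 b ψ s‖ ≤
      Real.exp (‖β + 1‖ * |ψ|) * Real.Gamma (β.re + α + 1) * m ^ (-β.re - α - 1) := by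
  have hdecay : ∀ μ : ℂ, 0 ≤ (μ * exp (↑(α * ψ) * I)).re → ∀ s > 0,
      m * s - 0 ≤ (μ * exp (↑(α * ψ) * I)).re * s ^ α + (b * exp (ψ * I)).re * s :=
    fun μ hμ s hs => by nlinarith [mul_nonneg hμ (Real.rpow_nonneg hs.le α)]
  have hre : (0 : ℝ) ≤ ((1 : ℂ) * exp (↑(α * ψ) * I)).re := by
    rwa [one_mul, Complex.exp_ofReal_mul_I_re]
  calc _ = ‖∫ s in Ioi 0, (rotatedIntegrand α β 1 b ψ s - rotatedIntegrand α β 0 b ψ s)‖ := by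
        rw [integral_sub (integrableOn_rotatedIntegrand hα hβ hm (hdecay 1 hre))
          (integrableOn_rotatedIntegrand hα hβ hm (hdecay 0 (by simp)))]
    _ ≤ ∫ s in Ioi 0, Real.exp (‖β + 1‖ * |ψ|) * (s ^ (β.re + α) * Real.exp (-(m * s))) :=
        norm_integral_le_of_norm_le
          ((integrableOn_rpow_mul_exp_neg_mul (by linarith) hm).const_mul _)
          ((ae_restrict_mem measurableSet_Ioi).mono
            fun s hs => norm_rotatedIntegrand_one_sub_zero_le hs hcos hb)
    _ = _ := by
        rw [integral_const_mul, ← add_sub_cancel_right (β.re + α) 1,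
          Real.integral_rpow_mul_exp_neg_mul_Ioi (by linarith) hm, one_div,
          Real.inv_rpow hm.le, ← Real.rpow_neg hm.le]
        ring_nf

theorem norm_integral_rotatedIntegrand_one_sub_Gamma_le (hα : 1 < α) (hβ : -1 < β.re)
    {R φ η : ℝ} (hR : 0 < R) (hη : 0 < η) (hφ : α * |φ| ≤ (α + 1) * (Real.pi / 2 - η)) :
    ‖(∫ s in Ioi 0, rotatedIntegrand α β 1 (R * exp (φ * I)) 0 s) -
        exp (-((β + 1) * (φ * I))) * Complex.Gamma (β + 1) * (R : ℂ) ^ (-(β + 1))‖ ≤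
      Real.exp (‖β + 1‖ * Real.pi) * Real.Gamma (β.re + α + 1) *
        Real.sin η ^ (-β.re - α - 1) * R ^ (-β.re - α - 1) := by
  have hα₀ : 0 < α := by linarith
  set ψ := -φ / (α + 1) with hψ
  have hangle : |α * ψ| ≤ Real.pi / 2 - η ∧ |φ + ψ| ≤ Real.pi / 2 - η := by
    have h₁ : α * ψ = -(α * φ / (α + 1)) := by ring
    have h₂ : φ + ψ = α * φ / (α + 1) := by rw [hψ]; field_simp; ring
    rw [h₁, h₂, abs_neg, abs_div, abs_mul, abs_of_pos hα₀, abs_of_pos (by linarith : 0 < α + 1),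
      div_le_iff₀ (by linarith), mul_comm _ (α + 1), and_self]
    exact hφ
  have hη' : η ≤ Real.pi / 2 := by linarith [abs_nonneg (α * ψ), hangle.1]
  have hsin : 0 < Real.sin η := Real.sin_pos_of_pos_of_lt_pi hη (by linarith [Real.pi_pos])
  have hcos : Real.sin η ≤ Real.cos (φ + ψ) := by
    rw [← Real.cos_pi_div_two_sub]
    exact cos_le_cos_of_abs_le hangle.2 (by linarith)
  rw [integral_rotatedIntegrand_one_zero_eq (ψ := ψ) hα hβ (by linarith [hangle.1]),
    ← integral_rotatedIntegrand_zero_eq_Gamma (α := α) (ψ := ψ) hβ hR (by linarith [hangle.2])]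
  refine (norm_integral_rotatedIntegrand_one_sub_zero_le hα₀.le hβ (mul_pos hR hsin)
    (Real.cos_nonneg_of_mem_Icc (abs_le.1 (by linarith [hangle.1]))) ?_).trans ?_
  · rw [re_ofReal_mul_exp_mul_exp]
    exact mul_le_mul_of_nonneg_left hcos hR.le
  · have hψπ : |ψ| ≤ Real.pi := by
      have : |ψ| ≤ |α * ψ| := by
        rw [abs_mul, abs_of_pos hα₀]; exact le_mul_of_one_le_left (abs_nonneg _) hα.le
      linarith [hangle.1]
    have := Real.Gamma_pos_of_pos (by linarith : 0 < β.re + α + 1)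
    rw [Real.mul_rpow hR.le hsin.le, mul_comm (R ^ _), ← mul_assoc]
    gcongr

lemma mul_abs_angle_le_of_mem_sector (hα : 0 < α) {ε η θ : ℝ} (hηε : (α + 1) * η ≤ α * ε)
    (hθ₁ : -Real.pi - Real.pi / α + ε ≤ θ) (hθ₂ : θ ≤ -ε) :
    α * |θ + Real.pi / 2 + Real.pi / (2 * α)| ≤ (α + 1) * (Real.pi / 2 - η) := by
  have hπα : Real.pi / α = 2 * (Real.pi / (2 * α)) := by field_simp
  have hαπ : α * (Real.pi / (2 * α)) = Real.pi / 2 := by field_simp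
  have : |θ + Real.pi / 2 + Real.pi / (2 * α)| ≤ Real.pi / 2 + Real.pi / (2 * α) - ε :=
    abs_le.2 ⟨by linarith, by linarith⟩
  nlinarith [mul_le_mul_of_nonneg_left this hα.le]

lemma Gab_ofReal_mul_exp (α R θ : ℝ) (β : ℂ) :
    Gab α β (R * exp (I * θ)) = exp (I * Real.pi * (β + 1) / (2 * α)) *
      ∫ s in Ioi (0 : ℝ), rotatedIntegrand α β 1
        (R * exp (↑(θ + Real.pi / 2 + Real.pi / (2 * α)) * I)) 0 s := by
  have hb : I * exp (I * Real.pi / (2 * α)) * (R * exp (I * θ)) =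
      R * exp (↑(θ + Real.pi / 2 + Real.pi / (2 * α)) * I) := by
    have : exp (↑(θ + Real.pi / 2 + Real.pi / (2 * α)) * I) =
        exp (Real.pi / 2 * I) * exp (I * Real.pi / (2 * α)) * exp (I * θ) := by
      rw [← Complex.exp_add, ← Complex.exp_add]
      push_cast
      ring_nf
    rw [this, Complex.exp_pi_div_two_mul_I]
    ring
  rw [Gab, ← hb]
  congr 1
  refine setIntegral_congr_fun measurableSet_Ioi fun t _ => ?_
  simp only [rotatedIntegrand, rotatedExponent, Complex.ofReal_zero, mul_zero, zero_mul,
    Complex.exp_zero, one_mul, mul_one, zero_sub]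

end FourierLaplace

open FourierLaplace

/-- First-order asymptotics of `G_{α,β}` in the sector
`−π − π/α < arg z < 0`, uniformly on closed subsectors. -/
theorem stmt_5 (α : ℝ) (hα : 1 < α) (β : ℂ) (hβ : -1 < β.re) :
    ∀ ε : ℝ, 0 < ε → ∃ K R₀ : ℝ, 0 < K ∧ 0 < R₀ ∧
      ∀ R : ℝ, R₀ ≤ R → ∀ θ : ℝ,
        -Real.pi - Real.pi / α + ε ≤ θ → θ ≤ -ε →
        ‖Gab α β (R * Complex.exp (Complex.I * θ)) -
            Complex.exp (-(Complex.I * (θ + Real.pi / 2) * (β + 1))) *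
              Complex.Gamma (β + 1) * (R : ℂ) ^ (-(β + 1))‖
          ≤ K * R ^ (-β.re - α - 1) := by
  intro ε hε
  have hα₀ : 0 < α := by linarith
  set η := min (α * ε / (α + 1)) 1
  have hη : 0 < η := lt_min (by positivity) one_pos
  have hsin : 0 < Real.sin η :=
    Real.sin_pos_of_pos_of_lt_pi hη ((min_le_right _ _).trans_lt (by linarith [Real.pi_gt_three]))
  set c := Complex.exp (Complex.I * Real.pi * (β + 1) / (2 * α))
  refine ⟨‖c‖ * (Real.exp (‖β + 1‖ * Real.pi) * Real.Gamma (β.re + α + 1) *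
    Real.sin η ^ (-β.re - α - 1)), 1, ?_, one_pos, fun R hR θ hθ₁ hθ₂ => ?_⟩
  · have := Real.Gamma_pos_of_pos (by linarith : 0 < β.re + α + 1)
    have := Complex.exp_ne_zero (Complex.I * Real.pi * (β + 1) / (2 * α))
    positivity
  have hηε : (α + 1) * η ≤ α * ε := by
    rw [← le_div_iff₀' (by linarith)]; exact min_le_left _ _
  have hmain : Complex.exp (-(Complex.I * (θ + Real.pi / 2) * (β + 1))) =
      c * Complex.exp (-((β + 1) * (↑(θ + Real.pi / 2 + Real.pi / (2 * α)) * Complex.I))) := by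
    rw [← Complex.exp_add]
    congr 1
    push_cast
    field_simp
    ring
  rw [Gab_ofReal_mul_exp, hmain, mul_assoc c, mul_assoc c, ← mul_sub, norm_mul, mul_assoc ‖c‖]
  exact mul_le_mul_of_nonneg_left
    (norm_integral_rotatedIntegrand_one_sub_Gamma_le hα hβ (by linarith) hη
      (mul_abs_angle_le_of_mem_sector hα₀ hηε hθ₁ hθ₂)) (norm_nonneg _)
end

section
/- Let α > 1 be real, β ∈ ℂ with Re β > −1, C > 0, and set κ = 1/(α−1). There exist constants K > 0 and x₀ > 0 such that for all z = x + iy with x ≤ −x₀ and |y| ≤ C log(2 + |x|)/(1 + |x|)^κ, one has |G_{α,β}(z)| ≤ K |x|^{−1 − Re β}. -/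
/-!
For `x ≤ -x₀` the hourglass condition forces `|y| ≤ (σ/2)|x|` with `σ = sin(π/(2α)) > 0`, so the
linear part `-i e^{iπ/(2α)} z t` of the rotated phase has real part `≤ -(σ/2)|x| t`. Dropping
`|exp(-t^α)| ≤ 1`, the integrand is dominated by `t^{Re β} e^{-r t}` with `r = (σ/2)|x|`, whose
integral is `Γ(Re β + 1) r^{-1-Re β}`.
-/

open MeasureTheory Set

open Filter Asymptotics

lemma norm_cpow_mul_exp_neg_rpow_sub_le (α : ℝ) (β w : ℂ) {t : ℝ} (ht : 0 < t) :
    ‖(t : ℂ) ^ β * Complex.exp (-(↑(t ^ α) : ℂ) - w * t)‖ ≤ t ^ β.re * Real.exp (-(w.re * t)) := by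
  rw [norm_mul, Complex.norm_cpow_eq_rpow_re_of_pos ht, Complex.norm_exp]
  gcongr
  have : 0 ≤ t ^ α := Real.rpow_nonneg ht.le α
  simp only [Complex.sub_re, Complex.neg_re, Complex.ofReal_re, Complex.mul_re,
    Complex.ofReal_im, mul_zero, sub_zero]
  linarith

lemma norm_integral_cpow_mul_exp_neg_rpow_sub_le (α : ℝ) {β w : ℂ} (hβ : -1 < β.re) {r : ℝ}
    (hr : 0 < r) (hrw : r ≤ w.re) :
    ‖∫ t in Ioi (0:ℝ), (t : ℂ) ^ β * Complex.exp (-(↑(t ^ α) : ℂ) - w * t)‖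
      ≤ Real.Gamma (β.re + 1) * r ^ (-1 - β.re) := by
  have hdom : IntegrableOn (fun t : ℝ => t ^ β.re * Real.exp (-(r * t))) (Ioi 0) := by
    simpa only [Real.rpow_one, neg_mul] using
      integrableOn_rpow_mul_exp_neg_mul_rpow (p := 1) hβ one_pos hr
  have hval : ∫ t in Ioi (0:ℝ), t ^ β.re * Real.exp (-(r * t))
      = Real.Gamma (β.re + 1) * r ^ (-1 - β.re) := by
    rw [← add_sub_cancel_right β.re 1, Real.integral_rpow_mul_exp_neg_mul_Ioi (by linarith) hr,
      add_sub_cancel_right, one_div, Real.inv_rpow hr.le, ← Real.rpow_neg hr.le, mul_comm]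
    ring_nf
  refine (norm_integral_le_integral_norm _).trans (hval ▸ ?_)
  refine integral_mono_of_nonneg (ae_of_all _ fun t => norm_nonneg _) hdom ?_
  refine (ae_restrict_iff' measurableSet_Ioi).mpr (ae_of_all _ fun t (ht : 0 < t) => ?_)
  refine (norm_cpow_mul_exp_neg_rpow_sub_le α β w ht).trans ?_
  have : r * t ≤ w.re * t := mul_le_mul_of_nonneg_right hrw ht.le
  exact mul_le_mul_of_nonneg_left (Real.exp_le_exp.mpr (by linarith)) (Real.rpow_nonneg ht.le _)

lemma sin_mul_abs_re_sub_abs_im_le (θ : ℝ) {z : ℂ} (hz : z.re ≤ 0) :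
    Real.sin θ * |z.re| - |z.im| ≤ (Complex.I * Complex.exp (θ * Complex.I) * z).re := by
  have hcos : z.im * Real.cos θ ≤ |z.im| :=
    calc z.im * Real.cos θ ≤ |z.im| * |Real.cos θ| := (le_abs_self _).trans_eq (abs_mul _ _)
      _ ≤ |z.im| := mul_le_of_le_one_right (abs_nonneg _) (Real.abs_cos_le_one θ)
  rw [Complex.exp_mul_I, ← Complex.ofReal_cos, ← Complex.ofReal_sin, abs_of_nonpos hz]
  simp only [Complex.mul_re, Complex.mul_im, Complex.add_re, Complex.add_im, Complex.I_re,
    Complex.I_im, Complex.ofReal_re, Complex.ofReal_im]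
  linarith

lemma norm_Gab_le (α : ℝ) {β : ℂ} (hβ : -1 < β.re) {z : ℂ} (hz : z.re ≤ 0) {r : ℝ} (hr : 0 < r)
    (hrz : r ≤ Real.sin (Real.pi / (2 * α)) * |z.re| - |z.im|) :
    ‖Gab α β z‖ ≤ ‖Complex.exp (Complex.I * Real.pi * (β + 1) / (2 * α))‖ *
      Real.Gamma (β.re + 1) * r ^ (-1 - β.re) := by
  have hphase : Complex.I * Real.pi / (2 * α) = ((Real.pi / (2 * α) : ℝ) : ℂ) * Complex.I := by
    push_cast; ring
  rw [Gab, norm_mul, hphase, mul_assoc _ (Real.Gamma _)]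
  gcongr
  exact norm_integral_cpow_mul_exp_neg_rpow_sub_le α hβ hr
    (hrz.trans (sin_mul_abs_re_sub_abs_im_le _ hz))

lemma eventually_mul_log_div_rpow_le (C : ℝ) {κ c : ℝ} (hκ : 0 ≤ κ) (hc : 0 < c) :
    ∀ᶠ u in atTop, C * Real.log (2 + u) / (1 + u) ^ κ ≤ c * u := by
  have hshift : (fun u : ℝ => 2 + u) =O[atTop] id :=
    (isLittleO_const_id_atTop (2 : ℝ)).isBigO.add (isBigO_refl _ _)
  have hlog : (fun u : ℝ => C * Real.log (2 + u)) =o[atTop] id :=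
    ((Real.isLittleO_log_id_atTop.comp_tendsto
      (tendsto_atTop_add_const_left _ 2 tendsto_id)).trans_isBigO hshift).const_mul_left C
  filter_upwards [hlog.def hc, eventually_ge_atTop 0] with u hu hu0
  have hden : 1 ≤ (1 + u) ^ κ := Real.one_le_rpow (by linarith) hκ
  calc C * Real.log (2 + u) / (1 + u) ^ κ ≤ |C * Real.log (2 + u)| / (1 + u) ^ κ := by
        gcongr; exact le_abs_self _
    _ ≤ |C * Real.log (2 + u)| := div_le_self (abs_nonneg _) hden
    _ ≤ c * u := by simpa [abs_of_nonneg hu0] using hu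

theorem stmt_8_general (α : ℝ) (hα : 1 < α) (β : ℂ) (hβ : -1 < β.re) (C : ℝ) :
    ∃ K x₀ : ℝ, 0 < K ∧ 0 < x₀ ∧
      ∀ z : ℂ, z.re ≤ -x₀ →
        |z.im| ≤ C * Real.log (2 + |z.re|) / (1 + |z.re|) ^ (1 / (α - 1)) →
        ‖Gab α β z‖ ≤ K * |z.re| ^ (-1 - β.re) := by
  set σ := Real.sin (Real.pi / (2 * α))
  have hσ : 0 < σ := Real.sin_pos_of_pos_of_lt_pi (by positivity)
    (by rw [div_lt_iff₀ (by positivity)]; nlinarith [Real.pi_pos])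
  have hκ : 0 ≤ 1 / (α - 1) := one_div_nonneg.mpr (by linarith)
  obtain ⟨x₀, hx₀⟩ := eventually_atTop.1 (eventually_mul_log_div_rpow_le C hκ (half_pos hσ))
  have hK : 0 < ‖Complex.exp (Complex.I * Real.pi * (β + 1) / (2 * α))‖ *
      Real.Gamma (β.re + 1) * (σ / 2) ^ (-1 - β.re) :=
    mul_pos (mul_pos (norm_pos_iff.mpr (Complex.exp_ne_zero _))
      (Real.Gamma_pos_of_pos (by linarith))) (Real.rpow_pos_of_pos (half_pos hσ) _)
  refine ⟨_, max x₀ 1, hK, by positivity, fun z hx hy => ?_⟩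
  have hre : z.re < 0 := by linarith [le_max_right x₀ 1]
  have hu : max x₀ 1 ≤ |z.re| := by rw [abs_of_neg hre]; linarith
  have hu0 : 0 < |z.re| := by linarith [le_max_right x₀ 1]
  have him : |z.im| ≤ σ / 2 * |z.re| := hy.trans (hx₀ _ ((le_max_left _ _).trans hu))
  calc ‖Gab α β z‖ ≤ ‖Complex.exp (Complex.I * Real.pi * (β + 1) / (2 * α))‖ *
        Real.Gamma (β.re + 1) * (σ / 2 * |z.re|) ^ (-1 - β.re) :=
        norm_Gab_le α hβ hre.le (by positivity) (by linarith)
    _ = _ := by rw [Real.mul_rpow (half_pos hσ).le hu0.le]; ring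

/-- Bound for `G_{α,β}` on the negative-real part of the hourglass-shaped
region `|y| ≤ C log(2+|x|)/(1+|x|)^κ`, `κ = 1/(α−1)`. -/
theorem stmt_8 (α : ℝ) (hα : 1 < α) (β : ℂ) (hβ : -1 < β.re) (C : ℝ) (hC : 0 < C) :
    ∃ K x₀ : ℝ, 0 < K ∧ 0 < x₀ ∧
      ∀ z : ℂ, z.re ≤ -x₀ →
        |z.im| ≤ C * Real.log (2 + |z.re|) / (1 + |z.re|) ^ (1 / (α - 1)) →
        ‖Gab α β z‖ ≤ K * |z.re| ^ (-1 - β.re) :=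
  stmt_8_general α hα β hβ C
end

section
/- Let κ > 0. There exists a constant c ∈ ℂ such that, as x → ∞, ∫₀^x exp(i t^{1+1/κ}) dt = c + exp(i x^{1+1/κ}) / ( i (1 + 1/κ) x^{1/κ} ) + O( x^{−1 − 2/κ} ). -/
open MeasureTheory Set

/-!
With `α = 1 + 1/κ` and `C = (iα)⁻¹`, the function `C e^{i t^α} t^{γ+1-α}` has derivative
`e^{i t^α} t^γ + C (γ+1-α) e^{i t^α} t^{γ-α}`, so integrating by parts trades `t^γ` for the
better decaying `t^{γ-α}`. One step on `[1, x]` (with `γ = 0`) produces the boundary term and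
leaves `C (1-α) ∫₁ˣ e^{i t^α} t^{-α} dt`, which converges absolutely as `x → ∞`; the constant `c`
absorbs its limit. A second step on `(x, ∞)` bounds the remaining tail by `(2/α) x^{1-2α}`,
and `1 - 2α = -1 - 2/κ`.
-/

open Complex Filter

noncomputable def chirp (α t : ℝ) : ℂ := cexp (I * ↑(t ^ α))

lemma norm_chirp (α t : ℝ) : ‖chirp α t‖ = 1 := norm_exp_I_mul_ofReal _

lemma norm_chirp_mul_rpow (α : ℝ) {t : ℝ} (ht : 0 ≤ t) (γ : ℝ) :
    ‖chirp α t * ↑(t ^ γ)‖ = t ^ γ := by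
  rw [norm_mul, norm_chirp, one_mul, norm_real, Real.norm_of_nonneg (Real.rpow_nonneg ht γ)]

lemma continuousOn_chirp_mul_rpow (α γ : ℝ) :
    ContinuousOn (fun t => chirp α t * ↑(t ^ γ)) (Ioi 0) := by
  intro t ht
  have hrpow (p : ℝ) : ContinuousAt (fun t : ℝ => ((t ^ p : ℝ) : ℂ)) t :=
    continuous_ofReal.continuousAt.comp (Real.continuousAt_rpow_const t p (Or.inl (ne_of_gt ht)))
  exact ((continuous_exp.continuousAt.comp
    (continuousAt_const.mul (hrpow α))).mul (hrpow γ)).continuousWithinAt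

lemma integrableOn_Ioi_chirp_mul_rpow (α : ℝ) {γ : ℝ} (hγ : γ < -1) {x : ℝ} (hx : 0 < x) :
    IntegrableOn (fun t => chirp α t * ↑(t ^ γ)) (Ioi x) := by
  refine (integrableOn_Ioi_rpow_of_lt hγ hx).mono'
    (((continuousOn_chirp_mul_rpow α γ).mono (Ioi_subset_Ioi hx.le)).aestronglyMeasurable
      measurableSet_Ioi) ?_
  filter_upwards [ae_restrict_mem measurableSet_Ioi] with t ht
  exact (norm_chirp_mul_rpow α (hx.trans ht).le γ).le

section IntegrationByParts

variable {α : ℝ}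

lemma hasDerivAt_chirp_mul_rpow (hα : α ≠ 0) (γ : ℝ) {t : ℝ} (ht : 0 < t) :
    HasDerivAt (fun t => (I * α)⁻¹ * (chirp α t * ↑(t ^ (γ + 1 - α))))
      (chirp α t * ↑(t ^ γ) + (I * α)⁻¹ * ↑(γ + 1 - α) * (chirp α t * ↑(t ^ (γ - α)))) t := by
  have hphase : HasDerivAt (fun t : ℝ => ((t ^ α : ℝ) : ℂ)) ↑(α * t ^ (α - 1)) t :=
    (Real.hasDerivAt_rpow_const (Or.inl ht.ne')).ofReal_comp
  have hamp : HasDerivAt (fun t : ℝ => ((t ^ (γ + 1 - α) : ℝ) : ℂ))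
      ↑((γ + 1 - α) * t ^ (γ + 1 - α - 1)) t :=
    (Real.hasDerivAt_rpow_const (Or.inl ht.ne')).ofReal_comp
  refine ((((hphase.const_mul I).cexp).mul hamp).const_mul (I * α)⁻¹).congr_deriv ?_
  have hsplit : t ^ γ = t ^ (α - 1) * t ^ (γ + 1 - α) := by
    rw [← Real.rpow_add ht]; ring_nf
  rw [hsplit, show γ + 1 - α - 1 = γ - α by ring]
  simp only [chirp]
  push_cast
  field_simp [ofReal_ne_zero.2 hα]

lemma integral_chirp_mul_rpow_eq (hα : α ≠ 0) (γ : ℝ) {a b : ℝ} (ha : 0 < a) (hb : 0 < b) :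
    ∫ t in a..b, chirp α t * ↑(t ^ γ) =
      (I * α)⁻¹ * (chirp α b * ↑(b ^ (γ + 1 - α))) - (I * α)⁻¹ * (chirp α a * ↑(a ^ (γ + 1 - α)))
        - (I * α)⁻¹ * ↑(γ + 1 - α) * ∫ t in a..b, chirp α t * ↑(t ^ (γ - α)) := by
  have hpos : uIcc a b ⊆ Ioi 0 := fun t ht => lt_of_lt_of_le (lt_min ha hb) ht.1
  have hint (p : ℝ) : IntervalIntegrable (fun t => chirp α t * ↑(t ^ p)) volume a b :=
    ((continuousOn_chirp_mul_rpow α p).mono hpos).intervalIntegrable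
  rw [eq_sub_iff_add_eq, ← intervalIntegral.integral_const_mul,
    ← intervalIntegral.integral_add (hint γ) ((hint (γ - α)).const_mul _)]
  exact intervalIntegral.integral_eq_sub_of_hasDerivAt
    (fun t ht => hasDerivAt_chirp_mul_rpow hα γ (hpos ht))
    ((hint γ).add ((hint (γ - α)).const_mul _))

lemma integral_Ioi_chirp_mul_rpow_eq (hα : 0 < α) {γ : ℝ} (hγ : γ < -1) {x : ℝ} (hx : 0 < x) :
    ∫ t in Ioi x, chirp α t * ↑(t ^ γ) =
      -((I * α)⁻¹ * (chirp α x * ↑(x ^ (γ + 1 - α))))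
        - (I * α)⁻¹ * ↑(γ + 1 - α) * ∫ t in Ioi x, chirp α t * ↑(t ^ (γ - α)) := by
  have hint := integrableOn_Ioi_chirp_mul_rpow α hγ hx
  have hint' := (integrableOn_Ioi_chirp_mul_rpow α (by linarith : γ - α < -1) hx).const_mul
    ((I * α)⁻¹ * ↑(γ + 1 - α))
  have hdecay : Tendsto (fun t => (I * α)⁻¹ * (chirp α t * ↑(t ^ (γ + 1 - α)))) atTop (nhds 0) := by
    rw [← mul_zero (I * α)⁻¹]
    refine tendsto_const_nhds.mul (squeeze_zero_norm' ?_
      (tendsto_rpow_neg_atTop (by linarith : 0 < -(γ + 1 - α))))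
    filter_upwards [eventually_gt_atTop 0] with t ht
    rw [norm_chirp_mul_rpow α ht.le, neg_neg]
  have hIbp := integral_Ioi_of_hasDerivAt_of_tendsto'
    (fun t ht => hasDerivAt_chirp_mul_rpow hα.ne' γ (hx.trans_le ht)) (hint.add hint') hdecay
  rw [integral_add hint hint', integral_const_mul, zero_sub] at hIbp
  exact eq_sub_of_add_eq hIbp

lemma norm_integral_Ioi_chirp_mul_rpow_le (hα : 0 < α) {γ : ℝ} (hγ : γ < -1) {x : ℝ}
    (hx : 0 < x) :
    ‖∫ t in Ioi x, chirp α t * ↑(t ^ γ)‖ ≤ 2 / α * x ^ (γ + 1 - α) := by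
  have hβ : γ + 1 - α < 0 := by linarith
  have hnormC : ‖(I * α)⁻¹‖ = α⁻¹ := by simp [abs_of_pos hα]
  have hrest : ‖∫ t in Ioi x, chirp α t * ↑(t ^ (γ - α))‖ ≤ x ^ (γ + 1 - α) / -(γ + 1 - α) := by
    calc ‖∫ t in Ioi x, chirp α t * ↑(t ^ (γ - α))‖
        ≤ ∫ t in Ioi x, ‖chirp α t * ↑(t ^ (γ - α))‖ := norm_integral_le_integral_norm _
      _ = ∫ t in Ioi x, t ^ (γ - α) :=
          setIntegral_congr_fun measurableSet_Ioi
            fun t ht => norm_chirp_mul_rpow α (hx.trans ht).le _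
      _ = x ^ (γ + 1 - α) / -(γ + 1 - α) := by
          rw [integral_Ioi_rpow_of_lt (by linarith) hx, neg_div, ← div_neg, sub_add_eq_add_sub]
  rw [integral_Ioi_chirp_mul_rpow_eq hα hγ hx]
  calc _ ≤ α⁻¹ * x ^ (γ + 1 - α) + α⁻¹ * -(γ + 1 - α) * (x ^ (γ + 1 - α) / -(γ + 1 - α)) := by
        refine (norm_sub_le _ _).trans (add_le_add (le_of_eq ?_) ?_)
        · rw [norm_neg, norm_mul, hnormC, norm_chirp_mul_rpow α hx.le]
        · rw [norm_mul, norm_mul, hnormC, norm_real, Real.norm_of_nonpos hβ.le]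
          gcongr
          exact mul_nonneg (inv_nonneg.2 hα.le) (neg_nonneg.2 hβ.le)
    _ = 2 / α * x ^ (γ + 1 - α) := by field_simp [hβ.ne]; ring

end IntegrationByParts

lemma continuous_chirp {α : ℝ} (hα : 0 ≤ α) : Continuous (chirp α) := by
  unfold chirp
  fun_prop (disch := assumption)

lemma exists_norm_integral_chirp_sub_le {α : ℝ} (hα : 1 < α) :
    ∃ c : ℂ, ∀ x > 0, ‖(∫ t in (0 : ℝ)..x, chirp α t) - c
      - (I * α)⁻¹ * (chirp α x * ↑(x ^ (1 - α)))‖ ≤ 2 * x ^ (1 - 2 * α) := by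
  have hα0 : 0 < α := by linarith
  have hint {x : ℝ} (hx : 0 < x) := integrableOn_Ioi_chirp_mul_rpow α (by linarith : -α < -1) hx
  set C : ℂ := (I * α)⁻¹
  refine ⟨(∫ t in (0 : ℝ)..1, chirp α t) - C * (chirp α 1 * ↑((1 : ℝ) ^ (1 - α)))
    - C * ↑(1 - α) * ∫ t in Ioi 1, chirp α t * ↑(t ^ (-α)), fun x hx => ?_⟩
  have hibp := integral_chirp_mul_rpow_eq hα0.ne' 0 one_pos hx
  simp only [Real.rpow_zero, ofReal_one, mul_one, zero_add, zero_sub] at hibp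
  have hremainder : (∫ t in (0 : ℝ)..x, chirp α t) - ((∫ t in (0 : ℝ)..1, chirp α t)
      - C * (chirp α 1 * ↑((1 : ℝ) ^ (1 - α)))
      - C * ↑(1 - α) * ∫ t in Ioi 1, chirp α t * ↑(t ^ (-α)))
      - C * (chirp α x * ↑(x ^ (1 - α)))
      = C * ↑(1 - α) * ∫ t in Ioi x, chirp α t * ↑(t ^ (-α)) := by
    have hcont := (continuous_chirp hα0.le).intervalIntegrable (μ := volume)
    rw [← intervalIntegral.integral_add_adjacent_intervals (hcont 0 1) (hcont 1 x), hibp,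
      ← intervalIntegral.integral_Ioi_sub_Ioi' (hint one_pos) (hint hx)]
    ring
  have hcoeff : ‖C * ↑(1 - α)‖ ≤ 1 := by
    rw [norm_mul, norm_inv, norm_mul, norm_I, one_mul, norm_real, norm_real,
      Real.norm_of_nonneg hα0.le, Real.norm_of_nonpos (by linarith), inv_mul_le_one₀ hα0]
    linarith
  calc _ = ‖C * ↑(1 - α)‖ * ‖∫ t in Ioi x, chirp α t * ↑(t ^ (-α))‖ := by
        rw [hremainder, norm_mul]
    _ ≤ 1 * (2 / α * x ^ (-α + 1 - α)) :=
        mul_le_mul hcoeff (norm_integral_Ioi_chirp_mul_rpow_le hα0 (by linarith) hx)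
          (norm_nonneg _) zero_le_one
    _ ≤ 2 * x ^ (1 - 2 * α) := by
        rw [one_mul, show -α + 1 - α = 1 - 2 * α by ring]
        gcongr
        exact div_le_self zero_le_two hα.le

/-- Asymptotics of `∫₀ˣ exp(i t^{1+1/κ}) dt` obtained by integration by
parts. -/
theorem stmt_10 (κ : ℝ) (hκ : 0 < κ) :
    ∃ c : ℂ, ∃ K x₀ : ℝ, 0 < K ∧ 0 < x₀ ∧ ∀ x : ℝ, x₀ ≤ x →
      ‖(∫ t in (0:ℝ)..x, Complex.exp (Complex.I * (↑(t ^ (1 + 1/κ)) : ℂ))) - c -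
          Complex.exp (Complex.I * (↑(x ^ (1 + 1/κ)) : ℂ)) /
            (Complex.I * (1 + 1/(κ:ℂ)) * (↑(x ^ (1/κ)) : ℂ))‖
        ≤ K * x ^ (-1 - 2/κ) := by
  obtain ⟨c, hc⟩ := exists_norm_integral_chirp_sub_le (α := 1 + 1 / κ) (by simp [hκ])
  refine ⟨c, 2, 1, two_pos, one_pos, fun x hx => ?_⟩
  have hx0 : 0 < x := one_pos.trans_le hx
  have hboundary : (I * ↑(1 + 1 / κ))⁻¹ * (chirp (1 + 1 / κ) x * ↑(x ^ (1 - (1 + 1 / κ))))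
      = cexp (I * ↑(x ^ (1 + 1 / κ))) / (I * (1 + 1 / (κ : ℂ)) * ↑(x ^ (1 / κ))) := by
    rw [show 1 - (1 + 1 / κ) = -(1 / κ) by ring, Real.rpow_neg hx0.le]
    push_cast
    simp only [chirp, div_eq_mul_inv, mul_inv]
    ring
  rw [show -1 - 2 / κ = 1 - 2 * (1 + 1 / κ) by ring]
  have h := hc x hx0
  rw [hboundary] at h
  exact h
end

section
/- Let κ > 0 and define τ(t) = exp( i t^{1+1/κ} / (log t)^{1/κ} ) for t ≥ e and τ(t) = 0 for 0 ≤ t < e. There exists a constant c ∈ ℂ such that, as x → ∞, ∫₀^x τ(t) dt = c + exp( i x (x/ log x)^{1/κ} ) / ( i (1 + 1/κ) ) · ( log x / x )^{1/κ} + O( (log x)^{1/κ − 1} / x^{1/κ} ). -/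
/-!
Write `b = 1/κ` and `φ(t) = t^{1+b} / (log t)^b`, so that `τ = e^{iφ}` on `[e, ∞)`.
With `a = 1/φ'` and `h = -a' a`, two integrations by parts show that
`G = e^{iφ} (-i a - h)` satisfies `G' = e^{iφ} (1 - h')`, hence
`∫_e^x τ = G x - G e + ∫_e^∞ e^{iφ} h' - ∫_x^∞ e^{iφ} h'`.

All of `φ'`, `a`, `h`, `h'` have the shape `t^p (log t)^q r(1/log t)` with `r` smooth near `0`
(`logScale p q r`), a class closed under differentiation in which the size as `t → ∞` is
read off from `p` and `q`. Thus `a(x) = (log x / x)^b / (1 + b) + O(x^{-b} (log x)^{b-1})`,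
`h(x) = O(x^{-1-2b} (log x)^{2b})`, and `h'(t) = O(t^{-2-2b} (log t)^{2b})`, whose tail integral
over `(x, ∞)` is `O(x^{-b-1/2})`.
-/

open MeasureTheory Set Filter Asymptotics Topology Real
open scoped ContDiff

noncomputable def logScale (p q : ℝ) (r : ℝ → ℝ) (t : ℝ) : ℝ :=
  t ^ p * log t ^ q * r (log t)⁻¹

noncomputable def logScaleDerivCoeff (p q : ℝ) (r : ℝ → ℝ) (u : ℝ) : ℝ :=
  p * r u + q * u * r u - u ^ 2 * deriv r u

theorem hasDerivAt_logScale (p q : ℝ) {r : ℝ → ℝ} {t : ℝ} (ht : 1 < t)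
    (hr : DifferentiableAt ℝ r (log t)⁻¹) :
    HasDerivAt (logScale p q r) (logScale (p - 1) q (logScaleDerivCoeff p q r) t) t := by
  have ht0 : 0 < t := one_pos.trans ht
  have hL : 0 < log t := log_pos ht
  have hlog := hasDerivAt_log ht0.ne'
  have hpow : HasDerivAt (fun s => s ^ p) (p * t ^ (p - 1)) t :=
    hasDerivAt_rpow_const (Or.inl ht0.ne')
  have hlogpow := (hasDerivAt_rpow_const (p := q) (Or.inl hL.ne')).comp t hlog
  have hcomp := hr.hasDerivAt.comp t (hlog.inv hL.ne')
  refine ((hpow.mul hlogpow).mul hcomp).congr_deriv ?_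
  simp only [Function.comp_apply, Pi.mul_apply, Pi.inv_apply, logScale, logScaleDerivCoeff,
    rpow_sub_one ht0.ne', rpow_sub_one hL.ne']
  field_simp
  ring

theorem continuousAt_logScale (p q : ℝ) {r : ℝ → ℝ} {t : ℝ} (ht : 1 < t)
    (hr : DifferentiableAt ℝ r (log t)⁻¹) : ContinuousAt (logScale p q r) t :=
  (hasDerivAt_logScale p q ht hr).continuousAt

theorem logScale_mul {p q p' q' p'' q'' : ℝ} (r r' : ℝ → ℝ) {t : ℝ} (ht : 1 < t)
    (hp : p + p' = p'') (hq : q + q' = q'') :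
    logScale p q r t * logScale p' q' r' t = logScale p'' q'' (fun u => r u * r' u) t := by
  simp only [logScale, ← hp, ← hq, rpow_add (one_pos.trans ht), rpow_add (log_pos ht)]
  ring

theorem ContDiffOn.differentiableAt_of_mem_Iio {r : ℝ → ℝ} {c u : ℝ}
    (hr : ContDiffOn ℝ ∞ r (Iio c)) (hu : u ∈ Iio c) : DifferentiableAt ℝ r u :=
  (hr.contDiffAt (isOpen_Iio.mem_nhds hu)).differentiableAt (by simp)

theorem ContDiffOn.continuousAt_of_mem_Iio {r : ℝ → ℝ} {c u : ℝ}
    (hr : ContDiffOn ℝ ∞ r (Iio c)) (hu : u ∈ Iio c) : ContinuousAt r u :=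
  (hr.differentiableAt_of_mem_Iio hu).continuousAt

theorem ContDiffOn.logScaleDerivCoeff {r : ℝ → ℝ} {U : Set ℝ} (hr : ContDiffOn ℝ ∞ r U)
    (hU : IsOpen U) (p q : ℝ) : ContDiffOn ℝ ∞ (logScaleDerivCoeff p q r) U := by
  have hr' := hr.deriv_of_isOpen hU (m := ∞) le_rfl
  unfold _root_.logScaleDerivCoeff
  fun_prop

theorem isBigO_logScale {r : ℝ → ℝ} (hr : ContinuousAt r 0) (p q : ℝ) :
    logScale p q r =O[atTop] fun t => t ^ p * log t ^ q := by
  have hbdd : (fun t => r (log t)⁻¹) =O[atTop] fun _ => (1 : ℝ) :=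
    (hr.tendsto.comp tendsto_log_atTop.inv_tendsto_atTop).isBigO_one ℝ
  have h := (isBigO_refl (fun t => t ^ p * log t ^ q) atTop).mul hbdd
  simp only [mul_one] at h
  exact h

theorem isBigO_rpow_mul_log_rpow {p q p' q' : ℝ} (hp : p < p') :
    (fun t => t ^ p * log t ^ q) =O[atTop] fun t => t ^ p' * log t ^ q' := by
  have ho := (isLittleO_log_rpow_rpow_atTop (q - q') (sub_pos.2 hp)).isBigO
  refine ((isBigO_refl (fun t => t ^ p * log t ^ q') atTop).mul ho).congr' ?_ ?_
  all_goals filter_upwards [eventually_gt_atTop 1] with t ht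
  · rw [mul_assoc, ← rpow_add (log_pos ht), add_sub_cancel]
  · rw [mul_right_comm, ← rpow_add (one_pos.trans ht), add_sub_cancel]

theorem hasDerivAt_oscillatory_antiderivative {φ a h : ℝ → ℝ} {φ' a' h' t : ℝ}
    (hφ : HasDerivAt φ φ' t) (ha : HasDerivAt a a' t) (hh : HasDerivAt h h' t)
    (hφa : φ' * a t = 1) (hha : h t = -(a' * a t)) :
    HasDerivAt (fun s => Complex.exp (Complex.I * φ s) * (-Complex.I * a s - h s))
      (Complex.exp (Complex.I * φ t) * (1 - h')) t := by
  have hE := ((hφ.ofReal_comp).const_mul Complex.I).cexp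
  refine (hE.mul (((ha.ofReal_comp).const_mul (-Complex.I)).sub hh.ofReal_comp)).congr_deriv ?_
  have hφaC : (φ' : ℂ) * a t = 1 := by exact_mod_cast hφa
  have hhaC : (h t : ℂ) = -(a' * a t) := by exact_mod_cast hha
  simp only [Pi.sub_apply, hhaC]
  linear_combination (Complex.exp (Complex.I * φ t)) * (1 + Complex.I * a') * hφaC
    - Complex.exp (Complex.I * φ t) * φ' * a t * Complex.I_sq

theorem intervalIntegral_eq_add_integral_Ioi_sub {E : Type*} [NormedAddCommGroup E]
    [NormedSpace ℝ E] [CompleteSpace E] {f g G : ℝ → E} {a x : ℝ} (hax : a ≤ x)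
    (hG : ∀ t ∈ Icc a x, HasDerivAt G (f t - g t) t)
    (hf : IntervalIntegrable f volume a x) (hg : IntegrableOn g (Ioi a)) :
    ∫ t in a..x, f t = G x - G a + ((∫ t in Ioi a, g t) - ∫ t in Ioi x, g t) := by
  have hg' : IntervalIntegrable g volume a x :=
    (intervalIntegrable_iff_integrableOn_Ioc_of_le hax).2 (hg.mono_set Ioc_subset_Ioi_self)
  have hftc := intervalIntegral.integral_eq_sub_of_hasDerivAt
    (fun t ht => hG t (uIcc_of_le hax ▸ ht)) (hf.sub hg')
  rw [intervalIntegral.integral_Ioi_sub_Ioi hg hax, ← hftc,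
    intervalIntegral.integral_sub hf hg', sub_add_cancel]

theorem isBigO_integral_Ioi_of_isBigO_rpow {E : Type*} [NormedAddCommGroup E]
    [NormedSpace ℝ E] {g : ℝ → E} {s : ℝ} (hs : 0 < s)
    (hbig : g =O[atTop] fun t => t ^ (-1 - s)) :
    (fun x => ∫ t in Ioi x, g t) =O[atTop] fun x => x ^ (-s) := by
  obtain ⟨C, hC⟩ := hbig.bound
  obtain ⟨T, hT⟩ := eventually_atTop.1 (hC.and (eventually_gt_atTop 0))
  refine IsBigO.of_bound (C / s) ?_
  filter_upwards [eventually_ge_atTop T, eventually_gt_atTop 0] with x hxT hx0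
  have hbound : ∀ t ∈ Ioi x, ‖g t‖ ≤ C * t ^ (-1 - s) := fun t ht => by
    have := (hT t (hxT.trans ht.le)).1
    rwa [norm_of_nonneg (rpow_nonneg (hx0.trans ht).le _)] at this
  have hint : ∫ t in Ioi x, C * t ^ (-1 - s) = C / s * x ^ (-s) := by
    rw [integral_const_mul, integral_Ioi_rpow_of_lt (by linarith) hx0,
      show -1 - s + 1 = -s by ring]
    field_simp
  calc ‖∫ t in Ioi x, g t‖ ≤ ∫ t in Ioi x, C * t ^ (-1 - s) :=
        norm_integral_le_of_norm_le
          ((integrableOn_Ioi_rpow_of_lt (by linarith) hx0).const_mul C)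
          ((ae_restrict_iff' measurableSet_Ioi).2 (ae_of_all _ hbound))
    _ = C / s * ‖x ^ (-s)‖ := by rw [hint, norm_of_nonneg (rpow_nonneg hx0.le _)]

theorem intervalIntegral_ite_lt {E : Type*} [NormedAddCommGroup E] [NormedSpace ℝ E]
    (f : ℝ → E) {a x : ℝ} (ha : 0 < a) (hax : a ≤ x) :
    ∫ t in (0:ℝ)..x, (if t < a then 0 else f t) = ∫ t in a..x, f t := by
  have hind : (fun t => if t < a then 0 else f t) = (Ici a).indicator f := by
    ext t
    simp only [indicator_apply, mem_Ici, ← not_lt, ite_not]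
  have hset : Ioc 0 x ∩ Ici a = Icc a x := by
    ext t
    simp only [mem_inter_iff, mem_Ioc, mem_Ici, mem_Icc]
    exact ⟨fun ⟨⟨_, htx⟩, hat⟩ => ⟨hat, htx⟩, fun ⟨hat, htx⟩ => ⟨⟨ha.trans_le hat, htx⟩, hat⟩⟩
  rw [hind, intervalIntegral.integral_of_le (ha.le.trans hax), intervalIntegral.integral_of_le hax,
    integral_indicator measurableSet_Ici, Measure.restrict_restrict measurableSet_Ici,
    inter_comm, hset, integral_Icc_eq_integral_Ioc]

theorem one_lt_of_exp_one_le {t : ℝ} (ht : exp 1 ≤ t) : 1 < t :=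
  (one_lt_exp_iff.2 one_pos).trans_le ht

section Phase

variable {b : ℝ}

noncomputable def phase (b t : ℝ) : ℝ := t ^ (1 + b) / log t ^ b

noncomputable def expPhase (b t : ℝ) : ℂ := Complex.exp (Complex.I * phase b t)

noncomputable def phaseDerivProfile (b u : ℝ) : ℝ := b + 1 - b * u

noncomputable def invPhaseDerivProfile (b u : ℝ) : ℝ := (phaseDerivProfile b u)⁻¹

noncomputable def invPhaseDeriv (b : ℝ) : ℝ → ℝ := logScale (-b) b (invPhaseDerivProfile b)

noncomputable def correctorProfile (b u : ℝ) : ℝ :=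
  -(logScaleDerivCoeff (-b) b (invPhaseDerivProfile b) u * invPhaseDerivProfile b u)

noncomputable def corrector (b : ℝ) : ℝ → ℝ :=
  logScale (-1 - 2 * b) (2 * b) (correctorProfile b)

noncomputable def correctorDeriv (b : ℝ) : ℝ → ℝ :=
  logScale (-1 - 2 * b - 1) (2 * b) (logScaleDerivCoeff (-1 - 2 * b) (2 * b) (correctorProfile b))

noncomputable def expPhaseAntideriv (b t : ℝ) : ℂ :=
  expPhase b t * (-Complex.I * invPhaseDeriv b t - corrector b t)

theorem norm_expPhase (b t : ℝ) : ‖expPhase b t‖ = 1 := by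
  rw [expPhase, mul_comm, Complex.norm_exp_ofReal_mul_I]

theorem phaseDerivProfile_pos (hb : 0 < b) {u : ℝ} (hu : u ∈ Iio ((b + 1) / b)) :
    0 < phaseDerivProfile b u := by
  rw [mem_Iio, lt_div_iff₀ hb] at hu
  rw [phaseDerivProfile]
  linarith

theorem inv_log_mem_Iio (hb : 0 < b) {t : ℝ} (ht : exp 1 ≤ t) :
    (log t)⁻¹ ∈ Iio ((b + 1) / b) := by
  have hL : 1 ≤ log t := by rwa [le_log_iff_exp_le ((exp_pos 1).trans_le ht)]
  rw [mem_Iio, lt_div_iff₀ hb]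
  have := inv_le_one_of_one_le₀ hL
  nlinarith

theorem zero_mem_Iio_add_one_div (hb : 0 < b) : (0 : ℝ) ∈ Iio ((b + 1) / b) := by
  rw [mem_Iio]
  positivity

theorem contDiffOn_invPhaseDerivProfile (hb : 0 < b) :
    ContDiffOn ℝ ∞ (invPhaseDerivProfile b) (Iio ((b + 1) / b)) :=
  ContDiffOn.inv (by unfold phaseDerivProfile; fun_prop) fun _ hu =>
    (phaseDerivProfile_pos hb hu).ne'

theorem contDiffOn_correctorProfile (hb : 0 < b) :
    ContDiffOn ℝ ∞ (correctorProfile b) (Iio ((b + 1) / b)) :=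
  (((contDiffOn_invPhaseDerivProfile hb).logScaleDerivCoeff isOpen_Iio _ _).mul
    (contDiffOn_invPhaseDerivProfile hb)).neg

theorem hasDerivAt_phase (b : ℝ) {t : ℝ} (ht : 1 < t) :
    HasDerivAt (phase b) (logScale b (-b) (phaseDerivProfile b) t) t := by
  have hcoeff : logScaleDerivCoeff (1 + b) (-b) (fun _ => 1) = phaseDerivProfile b := by
    ext u
    simp only [logScaleDerivCoeff, phaseDerivProfile, deriv_const]
    ring
  have h := hasDerivAt_logScale (1 + b) (-b) (r := fun _ => 1) ht (differentiableAt_const _)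
  rw [hcoeff, add_sub_cancel_left] at h
  refine h.congr_of_eventuallyEq ?_
  filter_upwards [lt_mem_nhds ht] with s hs
  simp only [phase, logScale, rpow_neg (log_pos hs).le, mul_one, div_eq_mul_inv]

theorem continuousOn_expPhase (b : ℝ) : ContinuousOn (expPhase b) (Ioi 1) := fun _ ht =>
  ((hasDerivAt_phase b ht).ofReal_comp.const_mul Complex.I).cexp.continuousAt.continuousWithinAt

theorem phaseDeriv_mul_invPhaseDeriv (hb : 0 < b) {t : ℝ} (ht : exp 1 ≤ t) :
    logScale b (-b) (phaseDerivProfile b) t * invPhaseDeriv b t = 1 := by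
  rw [invPhaseDeriv, logScale_mul _ _ (one_lt_of_exp_one_le ht) (add_neg_cancel b)
    (neg_add_cancel b)]
  simp only [logScale, invPhaseDerivProfile, rpow_zero, one_mul,
    mul_inv_cancel₀ (phaseDerivProfile_pos hb (inv_log_mem_Iio hb ht)).ne']

theorem hasDerivAt_invPhaseDeriv (hb : 0 < b) {t : ℝ} (ht : exp 1 ≤ t) :
    HasDerivAt (invPhaseDeriv b)
      (logScale (-b - 1) b (logScaleDerivCoeff (-b) b (invPhaseDerivProfile b)) t) t :=
  hasDerivAt_logScale _ _ (one_lt_of_exp_one_le ht)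
    ((contDiffOn_invPhaseDerivProfile hb).differentiableAt_of_mem_Iio (inv_log_mem_Iio hb ht))

theorem corrector_eq (b : ℝ) {t : ℝ} (ht : 1 < t) :
    corrector b t = -(logScale (-b - 1) b (logScaleDerivCoeff (-b) b (invPhaseDerivProfile b)) t *
      invPhaseDeriv b t) := by
  rw [invPhaseDeriv, logScale_mul _ _ ht (by ring : -b - 1 + -b = -1 - 2 * b) (two_mul b).symm,
    corrector]
  simp only [logScale, correctorProfile, mul_neg]

theorem hasDerivAt_corrector (hb : 0 < b) {t : ℝ} (ht : exp 1 ≤ t) :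
    HasDerivAt (corrector b) (correctorDeriv b t) t :=
  hasDerivAt_logScale _ _ (one_lt_of_exp_one_le ht)
    ((contDiffOn_correctorProfile hb).differentiableAt_of_mem_Iio (inv_log_mem_Iio hb ht))

theorem continuousOn_correctorDeriv (hb : 0 < b) :
    ContinuousOn (correctorDeriv b) (Ici (exp 1)) := fun _ ht => by
  have hr := (contDiffOn_correctorProfile hb).logScaleDerivCoeff isOpen_Iio (-1 - 2 * b) (2 * b)
  exact (continuousAt_logScale _ _ (one_lt_of_exp_one_le ht)
    (hr.differentiableAt_of_mem_Iio (inv_log_mem_Iio hb ht))).continuousWithinAt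

theorem hasDerivAt_expPhaseAntideriv (hb : 0 < b) {t : ℝ} (ht : exp 1 ≤ t) :
    HasDerivAt (expPhaseAntideriv b) (expPhase b t - expPhase b t * correctorDeriv b t) t := by
  rw [← mul_one_sub]
  exact hasDerivAt_oscillatory_antiderivative (hasDerivAt_phase b (one_lt_of_exp_one_le ht))
    (hasDerivAt_invPhaseDeriv hb ht) (hasDerivAt_corrector hb ht)
    (phaseDeriv_mul_invPhaseDeriv hb ht) (corrector_eq b (one_lt_of_exp_one_le ht))

theorem invPhaseDeriv_sub (hb : 0 < b) {t : ℝ} (ht : exp 1 ≤ t) :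
    invPhaseDeriv b t - (log t / t) ^ b / (b + 1) =
      b / (b + 1) * logScale (-b) (b - 1) (invPhaseDerivProfile b) t := by
  have ht0 : 0 < t := (exp_pos 1).trans_le ht
  have hL : 0 < log t := log_pos (one_lt_of_exp_one_le ht)
  have hpos := phaseDerivProfile_pos hb (inv_log_mem_Iio hb ht)
  simp only [invPhaseDeriv, logScale, invPhaseDerivProfile, div_rpow hL.le ht0.le,
    rpow_neg ht0.le, rpow_sub_one hL.ne']
  rw [phaseDerivProfile] at hpos ⊢
  have hne : (b + 1) * log t - b ≠ 0 := by
    have := mul_pos hpos hL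
    rw [sub_mul, mul_assoc, inv_mul_cancel₀ hL.ne'] at this
    linarith
  field_simp
  ring

theorem isBigO_corrector (hb : 0 < b) :
    corrector b =O[atTop] fun t => t ^ (-b) * log t ^ (b - 1) :=
  (isBigO_logScale ((contDiffOn_correctorProfile hb).continuousAt_of_mem_Iio
    (zero_mem_Iio_add_one_div hb)) _ _).trans
    (isBigO_rpow_mul_log_rpow (by linarith))

theorem isBigO_correctorDeriv (hb : 0 < b) :
    correctorDeriv b =O[atTop] fun t => t ^ (-1 - (b + 1 / 2)) := by
  have hcont := ((contDiffOn_correctorProfile hb).logScaleDerivCoeff isOpen_Iio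
    (-1 - 2 * b) (2 * b)).continuousAt_of_mem_Iio (zero_mem_Iio_add_one_div hb)
  have h := (isBigO_logScale hcont _ _).trans
    (isBigO_rpow_mul_log_rpow (p := -1 - 2 * b - 1) (q := 2 * b) (p' := -1 - (b + 1 / 2)) (q' := 0)
      (by linarith))
  simp only [rpow_zero, mul_one] at h
  exact h

theorem isBigO_expPhaseAntideriv_sub (hb : 0 < b) :
    (fun x => expPhaseAntideriv b x -
        expPhase b x / (Complex.I * (1 + b)) * ((log x / x) ^ b : ℝ))
      =O[atTop] fun x => x ^ (-b) * log x ^ (b - 1) := by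
  have hdiff : (fun x => invPhaseDeriv b x - (log x / x) ^ b / (b + 1))
      =O[atTop] fun x => x ^ (-b) * log x ^ (b - 1) := by
    refine ((isBigO_logScale ((contDiffOn_invPhaseDerivProfile hb).continuousAt_of_mem_Iio
      (zero_mem_Iio_add_one_div hb)) (-b) (b - 1)).const_mul_left (b / (b + 1))).congr'
      ?_ EventuallyEq.rfl
    filter_upwards [eventually_ge_atTop (exp 1)] with x hx
    exact (invPhaseDeriv_sub hb hx).symm
  refine (IsBigO.of_bound 1 (Eventually.of_forall fun x => ?_)).trans
    (hdiff.norm_left.add (isBigO_corrector hb).norm_left)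
  have hsplit : expPhaseAntideriv b x - expPhase b x / (Complex.I * (1 + b)) *
      ((log x / x) ^ b : ℝ) = expPhase b x * (-Complex.I *
        ((invPhaseDeriv b x - (log x / x) ^ b / (b + 1) : ℝ) : ℂ) - corrector b x) := by
    rw [expPhaseAntideriv, div_eq_mul_inv, mul_inv, Complex.inv_I, add_comm (1 : ℂ)]
    push_cast
    field_simp
    ring
  rw [hsplit, norm_mul, norm_expPhase, one_mul, one_mul, Real.norm_of_nonneg (by positivity)]
  refine (norm_sub_le _ _).trans ?_
  simp only [norm_mul, norm_neg, Complex.norm_I, one_mul, Complex.norm_real, le_refl]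

theorem isBigO_expPhase_mul_correctorDeriv (hb : 0 < b) :
    (fun t => expPhase b t * correctorDeriv b t) =O[atTop] fun t => t ^ (-1 - (b + 1 / 2)) :=
  (IsBigO.of_bound 1 (Eventually.of_forall fun t => by
    rw [norm_mul, norm_expPhase, one_mul, one_mul, Complex.norm_real])).trans
    (isBigO_correctorDeriv hb)

theorem integrableOn_expPhase_mul_correctorDeriv (hb : 0 < b) :
    IntegrableOn (fun t => expPhase b t * correctorDeriv b t) (Ioi (exp 1)) := by
  have hcont : ContinuousOn (fun t => expPhase b t * correctorDeriv b t) (Ici (exp 1)) :=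
    ((continuousOn_expPhase b).mono fun _ ht => one_lt_of_exp_one_le ht).mul
      (Complex.continuous_ofReal.comp_continuousOn (continuousOn_correctorDeriv hb))
  exact (LocallyIntegrableOn.integrableOn_of_isBigO_atTop
    (hcont.locallyIntegrableOn measurableSet_Ici) (isBigO_expPhase_mul_correctorDeriv hb)
    (integrableAtFilter_rpow_atTop_iff.2 (by linarith))).mono_set Ioi_subset_Ici_self

theorem mul_div_log_rpow_eq_phase (b : ℝ) {x : ℝ} (hx : 1 < x) :
    x * (x / log x) ^ b = phase b x := by
  have hx0 : 0 < x := one_pos.trans hx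
  rw [phase, div_rpow hx0.le (log_pos hx).le, rpow_add hx0, rpow_one, mul_div_assoc]

theorem exists_isBigO_integral_expPhase_sub (hb : 0 < b) : ∃ c : ℂ,
    (fun x => (∫ t in (exp 1)..x, expPhase b t) - c -
        Complex.exp (Complex.I * (↑(x * (x / log x) ^ b) : ℂ)) / (Complex.I * (1 + b)) *
          (↑((log x / x) ^ b) : ℂ))
      =O[atTop] fun x => log x ^ (b - 1) / x ^ b := by
  refine ⟨(∫ t in Ioi (exp 1), expPhase b t * correctorDeriv b t) - expPhaseAntideriv b (exp 1),
    ?_⟩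
  have hpow := isBigO_rpow_mul_log_rpow (q := 0) (q' := b - 1) (by linarith : -(b + 1 / 2) < -b)
  simp only [rpow_zero, mul_one] at hpow
  have htail := (isBigO_integral_Ioi_of_isBigO_rpow (by linarith)
    (isBigO_expPhase_mul_correctorDeriv hb)).trans hpow
  refine ((isBigO_expPhaseAntideriv_sub hb).sub htail).congr' ?_ ?_
  all_goals filter_upwards [eventually_ge_atTop (exp 1)] with x hx
  · have hx1 : 1 < x := one_lt_of_exp_one_le hx
    rw [intervalIntegral_eq_add_integral_Ioi_sub hx
      (fun t ht => hasDerivAt_expPhaseAntideriv hb ht.1)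
      ((continuousOn_expPhase b).mono fun t ht =>
        one_lt_of_exp_one_le (uIcc_of_le hx ▸ ht).1).intervalIntegrable
      (integrableOn_expPhase_mul_correctorDeriv hb), mul_div_log_rpow_eq_phase b hx1, expPhase]
    ring
  · rw [rpow_neg ((exp_pos 1).trans_le hx).le, div_eq_inv_mul, mul_comm]

end Phase

/-- Asymptotics of `∫₀ˣ τ(t) dt` for the extremal example
`τ(t) = exp(i t^{1+1/κ}/(log t)^{1/κ})` (for `t ≥ e`, `0` otherwise) of the
quantified Ingham–Karamata theorem. -/
theorem stmt_12 (κ : ℝ) (hκ : 0 < κ) :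
    ∃ c : ℂ, ∃ K x₀ : ℝ, 0 < K ∧ 0 < x₀ ∧ ∀ x : ℝ, x₀ ≤ x →
      ‖(∫ t in (0:ℝ)..x, if t < Real.exp 1 then (0:ℂ) else
            Complex.exp (Complex.I * (↑(t ^ (1 + 1/κ) / Real.log t ^ (1/κ)) : ℂ))) -
          c -
          Complex.exp (Complex.I * (↑(x * (x / Real.log x) ^ (1/κ)) : ℂ)) /
              (Complex.I * (1 + 1/(κ:ℂ))) *
            (↑((Real.log x / x) ^ (1/κ)) : ℂ)‖
        ≤ K * (Real.log x ^ (1/κ - 1) / x ^ (1/κ)) := by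
  obtain ⟨c, hc⟩ := exists_isBigO_integral_expPhase_sub (one_div_pos.2 hκ)
  obtain ⟨K, hK, hcK⟩ := hc.exists_pos
  obtain ⟨x₀, hx₀⟩ := eventually_atTop.1 (hcK.bound.and (eventually_ge_atTop (exp 1)))
  refine ⟨c, K, max x₀ 1, hK, lt_max_of_lt_right one_pos, fun x hx => ?_⟩
  obtain ⟨hbound, hex⟩ := hx₀ x (le_of_max_le_left hx)
  have hx1 : 1 < x := one_lt_of_exp_one_le hex
  convert hbound using 4
  · exact intervalIntegral_ite_lt (expPhase (1 / κ)) (exp_pos 1) hex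
  · push_cast
    rfl
  · exact (Real.norm_of_nonneg (div_nonneg (rpow_nonneg (log_nonneg hx1.le) _)
      (rpow_nonneg (by linarith) _))).symm
end

section
/- Let α > 1 and define S(x) = ∫₁^x (1 + cos((log u)^α)) du for x ≥ 1. Then, as x → ∞, S(x) = x + x sin((log x)^α) / ( α (log x)^{α−1} ) + O( x / (log x)^{2(α−1)} ). -/
/-!
Integrating by parts twice, the function (with `L = log u`)
`G(u) = u sin(L^α) / (α L^(α-1)) + u cos(L^α) (1 - (α-1)/L) / (α² L^(2(α-1)))`
satisfies `G' = cos(L^α) + R` with `R(u) = O(L^(-2(α-1)))`. The second summand of `G` is already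
`O(x / (log x)^(2(α-1)))`, and so is `∫ₑˣ R`: split it at `√x`; beyond `√x` one has
`log u ≥ (log x)/2`, and the part below `√x` is `O(√x)`.
-/

open MeasureTheory Set Real Filter Asymptotics

noncomputable def cosLogRpowCorrection (α u : ℝ) : ℝ :=
  u * (cos (log u ^ α) * (1 - (α - 1) / log u) / (α ^ 2 * (log u ^ (α - 1)) ^ 2))

noncomputable def cosLogRpowAntideriv (α u : ℝ) : ℝ :=
  u * sin (log u ^ α) / (α * log u ^ (α - 1)) + cosLogRpowCorrection α u

noncomputable def cosLogRpowRemainder (α u : ℝ) : ℝ :=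
  cos (log u ^ α) * (1 - 3 * (α - 1) / log u + (α - 1) * (2 * α - 1) / log u ^ 2) /
    (α ^ 2 * (log u ^ (α - 1)) ^ 2)

theorem hasDerivAt_cosLogRpowAntideriv {α u : ℝ} (hα : α ≠ 0) (hu : 1 < u) :
    HasDerivAt (cosLogRpowAntideriv α) (cos (log u ^ α) + cosLogRpowRemainder α u) u := by
  have hu0 : u ≠ 0 := by positivity
  have hL : 0 < log u := log_pos hu
  have hlog : HasDerivAt log u⁻¹ u := hasDerivAt_log hu0
  have hpow (β : ℝ) : HasDerivAt (fun v => log v ^ β) (u⁻¹ * β * log u ^ (β - 1)) u :=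
    hlog.rpow_const (.inl hL.ne')
  have hpow' : log u ^ (α - 1 - 1) = log u ^ (α - 1) / log u := by
    rw [rpow_sub hL, rpow_one]
  have ha : log u ^ (α - 1) ≠ 0 := (rpow_pos_of_pos hL _).ne'
  have hfirst := ((hasDerivAt_id u).mul (hpow α).sin).div ((hpow (α - 1)).const_mul α)
    (mul_ne_zero hα ha)
  have hcoeff := ((hasDerivAt_const u (α - 1)).div hlog hL.ne').const_sub 1
  have hden : α ^ 2 * (log u ^ (α - 1)) ^ 2 ≠ 0 :=
    mul_ne_zero (pow_ne_zero 2 hα) (pow_ne_zero 2 ha)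
  have hsecond := (hasDerivAt_id u).mul (((hpow α).cos.mul hcoeff).div
    (((hpow (α - 1)).pow 2).const_mul (α ^ 2)) hden)
  refine (hfirst.add hsecond).congr_deriv ?_
  simp only [cosLogRpowRemainder, Pi.mul_apply, Pi.div_apply, Pi.pow_apply, id, hpow']
  field_simp
  ring

theorem intervalIntegrable_cos_log_rpow (α a b : ℝ) :
    IntervalIntegrable (fun u => cos (log u ^ α)) volume a b :=
  intervalIntegrable_const.mono_fun' (Measurable.aestronglyMeasurable (by fun_prop))
    (.of_forall fun _ => abs_cos_le_one _)

theorem continuousOn_cosLogRpowRemainder {α : ℝ} (hα : α ≠ 0) :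
    ContinuousOn (cosLogRpowRemainder α) (Ioi 1) := by
  rintro u (hu : 1 < u)
  have hL : log u ≠ 0 := (log_pos hu).ne'
  have hu0 : u ≠ 0 := by positivity
  have hden : α ^ 2 * (log u ^ (α - 1)) ^ 2 ≠ 0 :=
    mul_ne_zero (pow_ne_zero 2 hα) (pow_ne_zero 2 (rpow_pos_of_pos (log_pos hu) _).ne')
  have hL2 : log u ^ 2 ≠ 0 := pow_ne_zero 2 hL
  have hrpow : log u ≠ 0 ∨ 0 ≤ α := .inl hL
  have hrpow' : log u ≠ 0 ∨ 0 ≤ α - 1 := .inl hL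
  unfold cosLogRpowRemainder
  apply ContinuousAt.continuousWithinAt
  fun_prop (disch := assumption)

theorem abs_div_le_abs_of_one_le {c L : ℝ} (hL : 1 ≤ L) : |c / L| ≤ |c| := by
  rw [abs_div, abs_of_pos (by linarith : (0:ℝ) < L)]
  exact div_le_self (abs_nonneg c) hL

theorem abs_cos_mul_div_sq_rpow_le {θ N c α L : ℝ} (hL : 0 < L) (hN : |N| ≤ c) :
    |cos θ * N / (α ^ 2 * (L ^ (α - 1)) ^ 2)| ≤ c / α ^ 2 / L ^ (2 * (α - 1)) := by
  have hden : α ^ 2 * (L ^ (α - 1)) ^ 2 = α ^ 2 * L ^ (2 * (α - 1)) := by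
    rw [← rpow_mul_natCast hL.le, Nat.cast_ofNat, mul_comm (α - 1)]
  rw [hden, div_div, abs_div, abs_mul,
    abs_of_nonneg (by positivity : 0 ≤ α ^ 2 * L ^ (2 * (α - 1)))]
  gcongr
  simpa using mul_le_mul (abs_cos_le_one θ) hN (abs_nonneg N) zero_le_one

theorem eventually_sqrt_le_div_log_rpow (β : ℝ) :
    ∀ᶠ x in atTop, √x ≤ x / log x ^ β := by
  filter_upwards [(isLittleO_log_rpow_rpow_atTop β one_half_pos).bound one_pos,
    eventually_gt_atTop 1] with x hbound hx
  have hL : 0 < log x ^ β := rpow_pos_of_pos (log_pos hx) β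
  rw [norm_of_nonneg hL.le, norm_of_nonneg (by positivity), one_mul, ← sqrt_eq_rpow] at hbound
  rw [le_div_iff₀ hL]
  calc √x * log x ^ β ≤ √x * √x := by gcongr
    _ = x := mul_self_sqrt (by linarith)

theorem isBigO_sqrt_div_log_rpow (β : ℝ) : (fun x => √x) =O[atTop] fun x => x / log x ^ β :=
  .of_bound' <| (eventually_sqrt_le_div_log_rpow β).mono fun x hx =>
    (norm_of_nonneg (sqrt_nonneg x)).trans_le (hx.trans (le_abs_self _))

theorem isBigO_const_div_log_rpow (c β : ℝ) : (fun _ => c) =O[atTop] fun x => x / log x ^ β :=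
  (isLittleO_const_left.2 (.inr (tendsto_norm_atTop_atTop.comp tendsto_sqrt_atTop))).isBigO.trans
    (isBigO_sqrt_div_log_rpow β)

theorem abs_integral_le_of_abs_le_div_log_rpow {f : ℝ → ℝ} {s t β C : ℝ} (hβ : 0 ≤ β)
    (hs : 1 < s) (hst : s ≤ t) (hf : ∀ u, s ≤ u → |f u| ≤ C / log u ^ β) :
    |∫ u in s..t, f u| ≤ C / log s ^ β * (t - s) := by
  have hLs : 0 < log s ^ β := rpow_pos_of_pos (log_pos hs) β
  have hC : 0 ≤ C :=
    nonneg_of_mul_nonneg_left ((abs_nonneg _).trans (hf s le_rfl)) (inv_pos.2 hLs)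
  have hbound : ∀ u ∈ uIoc s t, ‖f u‖ ≤ C / log s ^ β := by
    intro u hu
    rw [uIoc_of_le hst] at hu
    refine (hf u hu.1.le).trans (div_le_div_of_nonneg_left hC hLs ?_)
    exact rpow_le_rpow (log_pos hs).le (log_le_log (by linarith) hu.1.le) hβ
  simpa [abs_of_nonneg (sub_nonneg.2 hst)] using
    intervalIntegral.norm_integral_le_of_norm_le_const hbound

theorem isBigO_integral_of_abs_le_div_log_rpow {f : ℝ → ℝ} {a β C : ℝ} (hβ : 0 ≤ β)
    (ha : 1 < a) (hf_cont : ContinuousOn f (Ici a))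
    (hf : ∀ u, a ≤ u → |f u| ≤ C / log u ^ β) :
    (fun x => ∫ u in a..x, f u) =O[atTop] fun x => x / log x ^ β := by
  have hLa : 0 < log a ^ β := rpow_pos_of_pos (log_pos ha) β
  have hC : 0 ≤ C :=
    nonneg_of_mul_nonneg_left ((abs_nonneg _).trans (hf a le_rfl)) (inv_pos.2 hLa)
  have hbound : ∀ᶠ x in atTop,
      ‖∫ u in a..x, f u‖ ≤ C / log a ^ β * √x + C * 2 ^ β * (x / log x ^ β) := by
    filter_upwards [eventually_ge_atTop (a ^ 2)] with x hx
    have hx1 : 1 ≤ x := by nlinarith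
    have hay : a ≤ √x := (le_sqrt (by linarith) (by linarith)).2 hx
    have hyx : √x ≤ x := sqrt_le_self_iff.2 (.inr hx1)
    have hlog : log √x = log x / 2 := log_sqrt (by linarith)
    have hint {b c : ℝ} (hb : a ≤ b) (hc : a ≤ c) : IntervalIntegrable f volume b c :=
      (hf_cont.mono (ordConnected_Ici.uIcc_subset hb hc)).intervalIntegrable
    rw [← intervalIntegral.integral_add_adjacent_intervals (hint le_rfl hay)
      (hint hay (hay.trans hyx)), norm_eq_abs]
    calc |(∫ u in a..√x, f u) + ∫ u in √x..x, f u|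
        ≤ |∫ u in a..√x, f u| + |∫ u in √x..x, f u| := abs_add_le _ _
      _ ≤ C / log a ^ β * (√x - a) + C / log √x ^ β * (x - √x) :=
          add_le_add (abs_integral_le_of_abs_le_div_log_rpow hβ ha hay hf)
            (abs_integral_le_of_abs_le_div_log_rpow hβ (ha.trans_le hay) hyx
              fun u hu => hf u (hay.trans hu))
      _ ≤ C / log a ^ β * √x + C * 2 ^ β * (x / log x ^ β) := by
          have hLx : 0 ≤ log x ^ β := rpow_nonneg (log_nonneg hx1) β
          have h₁ : C / log a ^ β * (√x - a) ≤ C / log a ^ β * √x := by gcongr; linarith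
          have h₂ : C / (log x / 2) ^ β * (x - √x) =
              C * 2 ^ β * ((x - √x) / log x ^ β) := by
            rw [div_rpow (log_nonneg hx1) zero_le_two]; field_simp
          have h₃ : (x - √x) / log x ^ β ≤ x / log x ^ β := by
            gcongr; linarith [sqrt_nonneg x]
          rw [hlog, h₂]
          exact add_le_add h₁ (by gcongr)
  exact (IsBigO.of_norm_eventuallyLE hbound).trans
    (((isBigO_sqrt_div_log_rpow β).const_mul_left _).add ((isBigO_refl _ _).const_mul_left _))

theorem integral_cos_log_rpow_eq {α a b : ℝ} (hα : α ≠ 0) (ha : 1 < a) (hb : 1 < b) :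
    ∫ u in a..b, cos (log u ^ α) = cosLogRpowAntideriv α b - cosLogRpowAntideriv α a -
      ∫ u in a..b, cosLogRpowRemainder α u := by
  have hab : uIcc a b ⊆ Ioi 1 := ordConnected_Ioi.uIcc_subset ha hb
  have hR : IntervalIntegrable (cosLogRpowRemainder α) volume a b :=
    ((continuousOn_cosLogRpowRemainder hα).mono hab).intervalIntegrable
  have hFTC := intervalIntegral.integral_eq_sub_of_hasDerivAt
    (fun u hu => hasDerivAt_cosLogRpowAntideriv hα (hab hu))
    ((intervalIntegrable_cos_log_rpow α a b).add hR)
  rw [intervalIntegral.integral_add (intervalIntegrable_cos_log_rpow α a b) hR] at hFTC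
  linarith

theorem abs_cosLogRpowRemainder_le {α u : ℝ} (hu : 1 ≤ log u) :
    |cosLogRpowRemainder α u| ≤
      (1 + 3 * |α - 1| + |(α - 1) * (2 * α - 1)|) / α ^ 2 / log u ^ (2 * (α - 1)) := by
  refine abs_cos_mul_div_sq_rpow_le (by linarith) ?_
  have h₁ := abs_div_le_abs_of_one_le (c := 3 * (α - 1)) hu
  have h₂ := abs_div_le_abs_of_one_le (c := (α - 1) * (2 * α - 1)) (one_le_pow₀ hu (n := 2))
  rw [abs_mul, abs_of_pos (by norm_num : (0:ℝ) < 3)] at h₁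
  calc |1 - 3 * (α - 1) / log u + (α - 1) * (2 * α - 1) / log u ^ 2|
      ≤ |1| + |3 * (α - 1) / log u| + |(α - 1) * (2 * α - 1) / log u ^ 2| :=
        (abs_add_le _ _).trans (add_le_add_left (abs_sub _ _) _)
    _ ≤ 1 + 3 * |α - 1| + |(α - 1) * (2 * α - 1)| := by rw [abs_one]; linarith

theorem isBigO_cosLogRpowCorrection (α : ℝ) :
    cosLogRpowCorrection α =O[atTop] fun x => x / log x ^ (2 * (α - 1)) := by
  refine .of_bound ((1 + |α - 1|) / α ^ 2) ?_
  filter_upwards [eventually_ge_atTop (exp 1)] with x hx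
  have hx0 : 0 < x := (exp_pos 1).trans_le hx
  have hL : 1 ≤ log x := (le_log_iff_exp_le hx0).2 hx
  have hN : |1 - (α - 1) / log x| ≤ 1 + |α - 1| :=
    (abs_sub _ _).trans (by rw [abs_one]; linarith [abs_div_le_abs_of_one_le (c := α - 1) hL])
  rw [cosLogRpowCorrection, norm_mul, norm_of_nonneg hx0.le, norm_eq_abs,
    norm_of_nonneg (by positivity)]
  calc x * |cos (log x ^ α) * (1 - (α - 1) / log x) / (α ^ 2 * (log x ^ (α - 1)) ^ 2)|
      ≤ x * ((1 + |α - 1|) / α ^ 2 / log x ^ (2 * (α - 1))) := by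
        gcongr; exact abs_cos_mul_div_sq_rpow_le (by linarith) hN
    _ = (1 + |α - 1|) / α ^ 2 * (x / log x ^ (2 * (α - 1))) := by ring

theorem isBigO_integral_one_add_cos_log_rpow_sub {α : ℝ} (hα : 1 < α) :
    (fun x => (∫ u in (1:ℝ)..x, (1 + cos (log u ^ α))) - x -
        x * sin (log x ^ α) / (α * log x ^ (α - 1)))
      =O[atTop] fun x => x / log x ^ (2 * (α - 1)) := by
  have hα0 : α ≠ 0 := by positivity
  have he : 1 < exp 1 := one_lt_exp_iff.2 one_pos
  have hcos (a b : ℝ) := intervalIntegrable_cos_log_rpow α a b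
  obtain ⟨c₀, hdecomp⟩ : ∃ c₀, ∀ x, exp 1 ≤ x →
      (∫ u in (1:ℝ)..x, (1 + cos (log u ^ α))) - x -
          x * sin (log x ^ α) / (α * log x ^ (α - 1)) =
        c₀ + cosLogRpowCorrection α x - ∫ u in exp 1..x, cosLogRpowRemainder α u := by
    refine ⟨(∫ u in (1:ℝ)..exp 1, cos (log u ^ α)) - 1 - cosLogRpowAntideriv α (exp 1),
      fun x hx => ?_⟩
    rw [intervalIntegral.integral_add intervalIntegrable_const (hcos 1 x),
      intervalIntegral.integral_const, smul_eq_mul, mul_one,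
      ← intervalIntegral.integral_add_adjacent_intervals (hcos 1 (exp 1)) (hcos _ x),
      integral_cos_log_rpow_eq hα0 he (he.trans_le hx), cosLogRpowAntideriv]
    ring
  have hrem : (fun x => ∫ u in exp 1..x, cosLogRpowRemainder α u)
      =O[atTop] fun x => x / log x ^ (2 * (α - 1)) :=
    isBigO_integral_of_abs_le_div_log_rpow (by linarith) he
      ((continuousOn_cosLogRpowRemainder hα0).mono (Ici_subset_Ioi.2 he))
      fun u hu => abs_cosLogRpowRemainder_le ((le_log_iff_exp_le ((exp_pos 1).trans_le hu)).2 hu)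
  refine (((isBigO_const_div_log_rpow c₀ _).add (isBigO_cosLogRpowCorrection α)).sub hrem).congr'
    ?_ .rfl
  filter_upwards [eventually_ge_atTop (exp 1)] with x hx using (hdecomp x hx).symm

/-- Asymptotics of `S(x) = ∫₁ˣ (1 + cos((log u)^α)) du`, the explicit
counterexample to Müger's conjecture. -/
theorem stmt_13 (α : ℝ) (hα : 1 < α) :
    ∃ K x₀ : ℝ, 0 < K ∧ 1 < x₀ ∧ ∀ x : ℝ, x₀ ≤ x →
      |(∫ u in (1:ℝ)..x, (1 + Real.cos (Real.log u ^ α))) - x -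
          x * Real.sin (Real.log x ^ α) / (α * Real.log x ^ (α - 1))|
        ≤ K * (x / Real.log x ^ (2 * (α - 1))) := by
  obtain ⟨K, hK, hbound⟩ := (isBigO_integral_one_add_cos_log_rpow_sub hα).exists_pos
  obtain ⟨x₁, hx₁⟩ := eventually_atTop.1 (hbound.bound.and (eventually_gt_atTop 1))
  refine ⟨K, max x₁ 2, hK, one_lt_two.trans_le (le_max_right _ _), fun x hx => ?_⟩
  obtain ⟨hx, hx1⟩ := hx₁ x (le_of_max_le_left hx)
  have hg : 0 ≤ x / log x ^ (2 * (α - 1)) :=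
    div_nonneg (by linarith) (rpow_nonneg (log_nonneg hx1.le) _)
  rwa [norm_eq_abs, norm_of_nonneg hg] at hx
end

section
/- Let α > 1 and define S(x) = ∫₁^x (1 + cos((log u)^α)) du for x ≥ 1, and F_{α,0}(z) = ∫₀^∞ exp(i t^α − i z t) dt for Im z < 0. Then for every s ∈ ℂ with Re s > 1, ∫₁^∞ S(x) x^{−s−1} dx = 1/(s−1) − 1/s + ( F_{α,0}(i(1−s)) + conj( F_{α,0}( i(1 − conj(s)) ) ) ) / (2s), where conj denotes complex conjugation; note Im(i(1−s)) = 1 − Re s < 0, so both Fourier–Laplace transforms are given by absolutely convergent integrals. -/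
open MeasureTheory Set Filter Topology

/-!
Integrating by parts against `x ^ (-s - 1)` turns the Mellin transform of the primitive
`S x = ∫₁ˣ g` of the bounded function `g u = 1 + cos ((log u) ^ α)` into `s⁻¹ ∫₁^∞ g x x^(-s) dx`.
The substitution `x = eᵗ` makes this the Laplace transform of `1 + cos (t ^ α)` at `s - 1`, and
`cos θ = (e^{iθ} + e^{-iθ}) / 2` splits it into `1 / (s - 1)` and two Fourier–Laplace integrals,
the second being the conjugate of `F_{α,0}(i (1 - s̄))`.
-/

section MellinOfPrimitive

variable {g : ℝ → ℝ} {C : ℝ} {s : ℂ}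

theorem integrableOn_Ioi_one_of_norm_le_rpow {E : Type*} [NormedAddCommGroup E] {f : ℝ → E}
    {r : ℝ} (hr : 1 < r) (hf : AEStronglyMeasurable f (volume.restrict (Ioi 1)))
    (hbound : ∀ x > 1, ‖f x‖ ≤ C * x ^ (-r)) : IntegrableOn f (Ioi 1) := by
  refine Integrable.mono'
    ((integrableOn_Ioi_rpow_of_lt (a := -r) (by linarith) one_pos).const_mul C) hf ?_
  filter_upwards [ae_restrict_mem measurableSet_Ioi] with x hx using hbound x hx

theorem Measurable.intervalIntegrable_of_norm_le (hg : Measurable g) (hC : ∀ x, ‖g x‖ ≤ C)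
    (a b : ℝ) : IntervalIntegrable g volume a b :=
  intervalIntegrable_const.mono_fun' hg.aestronglyMeasurable (ae_of_all _ hC)

theorem norm_intervalIntegral_one_le (hC : ∀ x, ‖g x‖ ≤ C) {x : ℝ} (hx : 1 ≤ x) :
    ‖∫ u in (1:ℝ)..x, g u‖ ≤ C * x := by
  refine (intervalIntegral.norm_integral_le_of_norm_le_const fun u _ => hC u).trans ?_
  have hC0 : 0 ≤ C := (norm_nonneg _).trans (hC 0)
  rw [abs_of_nonneg (by linarith)]
  nlinarith

theorem integrableOn_Ioi_one_ofReal_mul_cpow (hg : Measurable g) (hC : ∀ x, ‖g x‖ ≤ C)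
    (hs : 1 < s.re) : IntegrableOn (fun x : ℝ => (g x : ℂ) * (x : ℂ) ^ (-s)) (Ioi 1) := by
  refine integrableOn_Ioi_one_of_norm_le_rpow (C := C) hs (by fun_prop) fun x (hx : 1 < x) => ?_
  rw [norm_mul, Complex.norm_real, Complex.norm_cpow_eq_rpow_re_of_pos (one_pos.trans hx)]
  gcongr
  · exact (norm_nonneg _).trans (hC 0)
  · exact hC x
  · exact hx.le
  · exact (Complex.neg_re s).le

theorem integrableOn_intervalIntegral_one_mul_cpow (hg : Measurable g) (hC : ∀ x, ‖g x‖ ≤ C)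
    (hs : 1 < s.re) :
    IntegrableOn (fun x : ℝ => ((∫ u in (1:ℝ)..x, g u : ℝ) : ℂ) * (x : ℂ) ^ (-s - 1))
      (Ioi 1) := by
  refine integrableOn_Ioi_one_of_norm_le_rpow (C := C) hs ?_ fun x (hx : 1 < x) => ?_
  · have := (intervalIntegral.continuous_primitive (hg.intervalIntegrable_of_norm_le hC) 1
      ).measurable
    fun_prop
  · have hx0 : 0 < x := one_pos.trans hx
    rw [norm_mul, Complex.norm_real, Complex.norm_cpow_eq_rpow_re_of_pos hx0]
    calc _ ≤ C * x * x ^ (-s - 1).re := by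
          gcongr
          exact norm_intervalIntegral_one_le hC hx.le
      _ = C * x ^ (-s.re) := by
          rw [mul_assoc, ← Real.rpow_one_add' hx0.le (by simp; linarith)]
          simp

theorem tendsto_intervalIntegral_one_mul_cpow_atTop (hC : ∀ x, ‖g x‖ ≤ C) (hs : 1 < s.re) :
    Tendsto (fun x : ℝ => ((∫ u in (1:ℝ)..x, g u : ℝ) : ℂ) * (x : ℂ) ^ (-s)) atTop (𝓝 0) := by
  refine squeeze_zero_norm' ?_ (by simpa using
    (tendsto_rpow_neg_atTop (by linarith : 0 < s.re - 1)).const_mul C)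
  filter_upwards [eventually_gt_atTop 1] with x hx
  have hx0 : 0 < x := one_pos.trans hx
  rw [norm_mul, Complex.norm_real, Complex.norm_cpow_eq_rpow_re_of_pos hx0, Complex.neg_re]
  calc _ ≤ C * x * x ^ (-s.re) := by
        gcongr
        exact norm_intervalIntegral_one_le hC hx.le
    _ = C * x ^ (1 - s.re) := by
        rw [sub_eq_add_neg, Real.rpow_add hx0, Real.rpow_one, mul_assoc]

theorem hasDerivAt_intervalIntegral_one_mul_cpow_div (hg : Measurable g)
    (hC : ∀ x, ‖g x‖ ≤ C) (hs : s ≠ 0) {x : ℝ} (hx : 0 < x) (hgx : ContinuousAt g x) :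
    HasDerivAt (fun y : ℝ => ((∫ u in (1:ℝ)..y, g u : ℝ) : ℂ) * (y : ℂ) ^ (-s) / -s)
      (((∫ u in (1:ℝ)..x, g u : ℝ) : ℂ) * (x : ℂ) ^ (-s - 1) - (g x : ℂ) * (x : ℂ) ^ (-s) / s)
      x := by
  have hS : HasDerivAt (fun y => ∫ u in (1:ℝ)..y, g u) (g x) x :=
    intervalIntegral.integral_hasDerivAt_right (hg.intervalIntegrable_of_norm_le hC _ _)
      hg.stronglyMeasurable.stronglyMeasurableAtFilter hgx
  have hpow : HasDerivAt (fun y : ℝ => (y : ℂ) ^ (-s) / -s) ((x : ℂ) ^ (-s - 1)) x := by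
    simpa using hasDerivAt_ofReal_cpow_const' hx.ne' (show -s - 1 ≠ -1 by simpa using hs)
  refine ((hS.ofReal_comp.mul hpow).congr_deriv ?_).congr_of_eventuallyEq
    (.of_forall fun y => mul_div_assoc _ _ _)
  field_simp
  ring

theorem integral_intervalIntegral_one_mul_cpow (hg : Measurable g) (hC : ∀ x, ‖g x‖ ≤ C)
    (hcont : ContinuousOn g (Ioi 1)) (hs : 1 < s.re) :
    ∫ x in Ioi (1:ℝ), ((∫ u in (1:ℝ)..x, g u : ℝ) : ℂ) * (x : ℂ) ^ (-s - 1) =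
      (∫ x in Ioi (1:ℝ), (g x : ℂ) * (x : ℂ) ^ (-s)) / s := by
  have hs0 : s ≠ 0 := by rintro rfl; simp at hs; linarith
  have hcont1 : ContinuousWithinAt
      (fun x : ℝ => ((∫ u in (1:ℝ)..x, g u : ℝ) : ℂ) * (x : ℂ) ^ (-s) / -s) (Ici 1) 1 :=
    (((Complex.continuous_ofReal.comp (intervalIntegral.continuous_primitive
      (hg.intervalIntegrable_of_norm_le hC) 1)).continuousAt.mul
      (Complex.continuousAt_ofReal_cpow_const 1 (-s) (Or.inr one_ne_zero))).div_const _
      ).continuousWithinAt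
  have hint := integrableOn_intervalIntegral_one_mul_cpow hg hC hs
  have hint' := (integrableOn_Ioi_one_ofReal_mul_cpow hg hC hs).div_const s
  have := integral_Ioi_of_hasDerivAt_of_tendsto hcont1
    (fun x (hx : 1 < x) => hasDerivAt_intervalIntegral_one_mul_cpow_div hg hC hs0
      (one_pos.trans hx) (hcont.continuousAt (Ioi_mem_nhds hx)))
    (hint.sub hint')
    (by simpa using (tendsto_intervalIntegral_one_mul_cpow_atTop hC hs).div_const (-s))
  rw [integral_sub hint hint', integral_div] at this
  simpa [sub_eq_zero] using this

end MellinOfPrimitive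

theorem integral_Ioi_one_comp_log_mul_cpow (f : ℝ → ℂ) (s : ℂ) :
    ∫ x in Ioi (1:ℝ), f (Real.log x) * (x : ℂ) ^ (-s) =
      ∫ t in Ioi (0:ℝ), f t * Complex.exp ((1 - s) * t) := by
  rw [← Real.exp_zero, ← integral_comp_exp_Ioi]
  refine setIntegral_congr_fun measurableSet_Ioi fun t _ => ?_
  rw [Real.log_exp, Complex.ofReal_exp, Complex.cpow_def_of_ne_zero (Complex.exp_ne_zero _),
    Complex.log_exp (by simp [Real.pi_pos]) (by simp [Real.pi_pos.le]), Complex.real_smul,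
    Complex.ofReal_exp, mul_left_comm, ← Complex.exp_add]
  ring_nf

theorem integrableOn_exp_mul_rpow_add_mul {b a : ℂ} (hb : b.re ≤ 0) (ha : a.re < 0) (α : ℝ) :
    IntegrableOn (fun t : ℝ => Complex.exp (b * (t ^ α : ℝ) + a * t)) (Ioi 0) := by
  refine (integrableOn_exp_mul_complex_Ioi ha 0).integrable.mono (by fun_prop) ?_
  filter_upwards [ae_restrict_mem measurableSet_Ioi] with t (ht : 0 < t)
  rw [Complex.norm_exp, Complex.norm_exp, Real.exp_le_exp]
  simpa [Complex.add_re, Complex.mul_re] using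
    mul_nonpos_of_nonpos_of_nonneg hb (Real.rpow_nonneg ht.le α)

theorem integral_one_add_cos_rpow_mul_exp (α : ℝ) {a : ℂ} (ha : a.re < 0) :
    ∫ t in Ioi (0:ℝ), ((1 + Real.cos (t ^ α) : ℝ) : ℂ) * Complex.exp (a * t) =
      -1 / a + ((∫ t in Ioi (0:ℝ), Complex.exp (Complex.I * (t ^ α : ℝ) + a * t)) +
        ∫ t in Ioi (0:ℝ), Complex.exp (-Complex.I * (t ^ α : ℝ) + a * t)) / 2 := by
  have hplus := integrableOn_exp_mul_rpow_add_mul (b := Complex.I) (by simp) ha α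
  have hminus := integrableOn_exp_mul_rpow_add_mul (b := -Complex.I) (by simp) ha α
  have hcos : IntegrableOn (fun t : ℝ => (Complex.exp (Complex.I * (t ^ α : ℝ) + a * t) +
      Complex.exp (-Complex.I * (t ^ α : ℝ) + a * t)) / 2) (Ioi 0) :=
    (hplus.add hminus).div_const 2
  calc _ = ∫ t in Ioi (0:ℝ), Complex.exp (a * t) +
        (Complex.exp (Complex.I * (t ^ α : ℝ) + a * t) +
          Complex.exp (-Complex.I * (t ^ α : ℝ) + a * t)) / 2 := by
        refine setIntegral_congr_fun measurableSet_Ioi fun t _ => ?_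
        rw [Complex.ofReal_add, Complex.ofReal_one, Complex.ofReal_cos, Complex.cos,
          Complex.exp_add, Complex.exp_add]
        ring_nf
    _ = _ := by
        rw [integral_add (integrableOn_exp_mul_complex_Ioi ha 0) hcos, integral_div,
          integral_add hplus hminus, integral_exp_mul_complex_Ioi ha]
        simp

theorem integral_exp_I_mul_rpow_sub_I_mul_I_mul (α : ℝ) (w : ℂ) :
    ∫ t in Ioi (0:ℝ), Complex.exp (Complex.I * (t ^ α : ℝ) - Complex.I * (Complex.I * w) * t) =
      ∫ t in Ioi (0:ℝ), Complex.exp (Complex.I * (t ^ α : ℝ) + w * t) := by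
  refine setIntegral_congr_fun measurableSet_Ioi fun t _ => ?_
  congr 1
  linear_combination -w * (t : ℂ) * Complex.I_mul_I

theorem conj_integral_exp_I_mul_rpow_sub_I_mul_I_mul_conj (α : ℝ) (w : ℂ) :
    (starRingEnd ℂ) (∫ t in Ioi (0:ℝ), Complex.exp (Complex.I * (t ^ α : ℝ) -
      Complex.I * (Complex.I * (starRingEnd ℂ) w) * t)) =
        ∫ t in Ioi (0:ℝ), Complex.exp (-Complex.I * (t ^ α : ℝ) + w * t) := by
  rw [integral_exp_I_mul_rpow_sub_I_mul_I_mul, ← integral_conj]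
  refine setIntegral_congr_fun measurableSet_Ioi fun t _ => ?_
  rw [← Complex.exp_conj]
  simp

theorem stmt_14_general (α : ℝ) (s : ℂ) (hs : 1 < s.re) :
    IntegrableOn (fun x : ℝ =>
      (↑(∫ u in (1:ℝ)..x, (1 + Real.cos (Real.log u ^ α))) : ℂ) * (x : ℂ) ^ (-s - 1))
      (Ioi 1) ∧
    (∫ x in Ioi (1:ℝ),
        (↑(∫ u in (1:ℝ)..x, (1 + Real.cos (Real.log u ^ α))) : ℂ) *
          (x : ℂ) ^ (-s - 1)) =
      1 / (s - 1) - 1 / s +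
        ((∫ t in Ioi (0:ℝ), Complex.exp (Complex.I * (↑(t ^ α) : ℂ) -
            Complex.I * (Complex.I * (1 - s)) * t)) +
          (starRingEnd ℂ) (∫ t in Ioi (0:ℝ),
            Complex.exp (Complex.I * (↑(t ^ α) : ℂ) -
              Complex.I * (Complex.I * (1 - (starRingEnd ℂ) s)) * t))) / (2 * s) := by
  have hmeas : Measurable fun u : ℝ => 1 + Real.cos (Real.log u ^ α) := by fun_prop
  have hbound (u : ℝ) : ‖1 + Real.cos (Real.log u ^ α)‖ ≤ 2 := by
    rw [Real.norm_eq_abs, abs_le]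
    constructor <;>
      linarith [Real.neg_one_le_cos (Real.log u ^ α), Real.cos_le_one (Real.log u ^ α)]
  have hcont : ContinuousOn (fun u : ℝ => 1 + Real.cos (Real.log u ^ α)) (Ioi 1) := fun u hu =>
    (continuousAt_const.add (Real.continuous_cos.continuousAt.comp
      ((Real.continuousAt_log (one_pos.trans hu).ne').rpow_const
        (Or.inl (Real.log_pos hu).ne')))).continuousWithinAt
  refine ⟨integrableOn_intervalIntegral_one_mul_cpow hmeas hbound hs, ?_⟩
  have hconj : 1 - (starRingEnd ℂ) s = (starRingEnd ℂ) (1 - s) := by simp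
  have hs0 : s ≠ 0 := by rintro rfl; simp at hs; linarith
  have hs1 : s - 1 ≠ 0 := by rw [sub_ne_zero]; rintro rfl; simp at hs
  rw [integral_intervalIntegral_one_mul_cpow hmeas hbound hcont hs,
    integral_Ioi_one_comp_log_mul_cpow (fun t => ((1 + Real.cos (t ^ α) : ℝ) : ℂ)) s,
    integral_one_add_cos_rpow_mul_exp α (by simpa using hs), hconj,
    integral_exp_I_mul_rpow_sub_I_mul_I_mul, conj_integral_exp_I_mul_rpow_sub_I_mul_I_mul_conj,
    neg_div, ← div_neg, neg_sub]
  field_simp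
  ring

/-- The Mellin transform of `S(x) = ∫₁ˣ (1 + cos((log u)^α)) du` in terms of
the Fourier–Laplace transform `F_{α,0}(z) = ∫₀^∞ exp(i t^α − i z t) dt`. -/
theorem stmt_14 (α : ℝ) (hα : 1 < α) (s : ℂ) (hs : 1 < s.re) :
    IntegrableOn (fun x : ℝ =>
      (↑(∫ u in (1:ℝ)..x, (1 + Real.cos (Real.log u ^ α))) : ℂ) * (x : ℂ) ^ (-s - 1))
      (Ioi 1) ∧
    (∫ x in Ioi (1:ℝ),
        (↑(∫ u in (1:ℝ)..x, (1 + Real.cos (Real.log u ^ α))) : ℂ) *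
          (x : ℂ) ^ (-s - 1)) =
      1 / (s - 1) - 1 / s +
        ((∫ t in Ioi (0:ℝ), Complex.exp (Complex.I * (↑(t ^ α) : ℂ) -
            Complex.I * (Complex.I * (1 - s)) * t)) +
          (starRingEnd ℂ) (∫ t in Ioi (0:ℝ),
            Complex.exp (Complex.I * (↑(t ^ α) : ℂ) -
              Complex.I * (Complex.I * (1 - (starRingEnd ℂ) s)) * t))) / (2 * s) :=
  stmt_14_general α s hs
end
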